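/- arXiv:1711.10509 — 12 statements merged into one kernel-verified Lean document; each statement's English description precedes it below -/
import Mathlib

section
/- Let k ≥ 1 and let t_1 < t_2 < ⋯ < t_k be natural numbers. Then for every nonzero vector (α_1,…,α_k) ∈ F₂^k, the linear polynomial α_1·x_1 + ⋯ + α_k·x_k divides the determinant V(2^{t_1},…,2^{t_k}) in F₂[x_1,…,x_k]. -/
open MvPolynomial

/-- `Vdm k t` is the determinant of the `k × k` matrix whose `(i, j)` entry is `xᵢ ^ t j`,
in `F₂[x₁, …, x_k]`. -/
noncomputable def Vdm (k : ℕ) (t : Fin k → ℕ) : MvPolynomial (Fin k) (ZMod 2) :=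
  Matrix.det (Matrix.of fun i j : Fin k => (X i : MvPolynomial (Fin k) (ZMod 2)) ^ t j)

/-- `D k = V(2^0, 2^1, …, 2^(k-1))`. -/
noncomputable def D (k : ℕ) : MvPolynomial (Fin k) (ZMod 2) :=
  Vdm k fun j => 2 ^ (j : ℕ)

/-- `N k ℓ j` is the Vandermonde determinant whose exponent tuple lists the 2-powers
`2^0, …, 2^(k-1)` with `2^j` omitted, followed by `2^ℓ`. -/
noncomputable def N (k ℓ j : ℕ) : MvPolynomial (Fin k) (ZMod 2) :=
  Vdm k fun i =>
    if (i : ℕ) + 1 < k then (if (i : ℕ) < j then 2 ^ (i : ℕ) else 2 ^ ((i : ℕ) + 1))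
    else 2 ^ ℓ

/- `G k m` is the sum of all monomials of total degree `m` in `x₁, …, x_k` in which
every nonzero exponent is a power of 2. -/
open Classical in
noncomputable def G (k m : ℕ) : MvPolynomial (Fin k) (ZMod 2) :=
  ∑ d : Fin k → Fin (m + 1),
    if (∑ i, (d i : ℕ)) = m ∧ ∀ i, (d i : ℕ) ≠ 0 → ∃ e, (d i : ℕ) = 2 ^ e then
      ∏ i, (X i : MvPolynomial (Fin k) (ZMod 2)) ^ (d i : ℕ)
    else 0

theorem stmt0 (k : ℕ) (hk : 1 ≤ k) (t : Fin k → ℕ) (ht : StrictMono t)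
    (α : Fin k → ZMod 2) (hα : α ≠ 0) :
    (∑ i, C (α i) * X i) ∣ Vdm k (fun i => 2 ^ t i) := by
  classical
  set R := MvPolynomial (Fin k) (ZMod 2)
  set L : R := ∑ i, C (α i) * X i with hL
  obtain ⟨i₀, hi₀⟩ : ∃ i, α i ≠ 0 := by
    by_contra h; push_neg at h; exact hα (funext h)
  have hα1 : α i₀ = 1 := by revert hi₀; generalize α i₀ = a; revert a; decide
  set M : Matrix (Fin k) (Fin k) R := Matrix.of fun i j => X i ^ 2 ^ t j with hM
  have key : (∑ i, (C (α i) : R) • M i) = fun j => L ^ 2 ^ t j := by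
    funext j
    rw [hL, sum_pow_char_pow (p := 2)]
    simp only [Finset.sum_apply, Pi.smul_apply, smul_eq_mul, hM, Matrix.of_apply]
    refine Finset.sum_congr rfl fun i _ => ?_
    rw [mul_pow, ← map_pow, ZMod.pow_card_pow]
  have hdet : M.det = (M.updateRow i₀ (∑ i, (C (α i) : R) • M i)).det := by
    rw [Matrix.det_updateRow_sum, hα1, map_one, one_smul]
  have hrow : (fun j => L ^ 2 ^ t j) = L • fun j => L ^ (2 ^ t j - 1) := by
    funext j
    rw [Pi.smul_apply, smul_eq_mul, ← pow_succ', Nat.sub_add_cancel Nat.one_le_two_pow]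
  have : Vdm k (fun i => 2 ^ t i) = M.det := rfl
  rw [this, hdet, key, hrow, Matrix.det_updateRow_smul]
  exact Dvd.intro _ rfl
end

section
/- For every k ≥ 1, the determinant D = V(2^0,2^1,…,2^{k−1}) equals the product, taken over all nonzero vectors α = (α_1,…,α_k) ∈ F₂^k, of the linear polynomials α_1·x_1 + ⋯ + α_k·x_k. -/
open MvPolynomial

/-!
Induction on `k`, splitting off the variable `x₀`. As a polynomial in `x₀`, the Frobenius-power
determinant is `𝔽₂`-linear of degree `2 ^ (k - 1)` with leading coefficient the same
determinant in the remaining variables, and it vanishes whenever `x₀` is an `𝔽₂`-combination of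
them. Those `2 ^ (k - 1)` combinations are distinct roots, so the determinant is its leading
coefficient times `∏ β, (x₀ + ∑ βᵢ xᵢ₊₁)`. On the other side, the nonzero `α` split into those
with `α₀ = 0`, giving the product for `k - 1` variables, and those with `α₀ = 1`.
-/

theorem Polynomial.eq_C_coeff_mul_prod_X_sub_C {R ι : Type*} [CommRing R] [IsDomain R]
    [Fintype ι] {p : Polynomial R} {r : ι → R} (hr : Function.Injective r)
    (hdeg : p.natDegree ≤ Fintype.card ι) (heval : ∀ i, p.eval (r i) = 0) :
    p = Polynomial.C (p.coeff (Fintype.card ι)) * ∏ i, (Polynomial.X - Polynomial.C (r i)) := by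
  open Polynomial in
  set Q : R[X] := ∏ i, (X - C (r i))
  have hQ : Q.Monic := monic_prod_X_sub_C r Finset.univ
  have hQdeg : Q.natDegree = Fintype.card ι := by simp [Q]
  rw [← sub_eq_zero]
  refine eq_zero_of_degree_lt_of_eval_index_eq_zero (s := Finset.univ) hr.injOn ?_ ?_
  · rw [Finset.card_univ, degree_lt_iff_coeff_zero]
    intro m hm
    have hm' : Fintype.card ι ≤ m := by exact_mod_cast hm
    rw [coeff_sub, coeff_C_mul]
    rcases hm'.eq_or_lt with h | h
    · rw [← h, ← hQdeg, hQ.coeff_natDegree, mul_one, sub_self]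
    · rw [coeff_eq_zero_of_natDegree_lt (hdeg.trans_lt h),
        coeff_eq_zero_of_natDegree_lt (p := Q) (by omega), mul_zero, sub_zero]
  · intro i _
    simp [Q, heval, eval_prod, Finset.prod_eq_zero (Finset.mem_univ i)]

section PowDet

variable {R S : Type*} [CommRing R] [CommRing S] {n : ℕ}

noncomputable def powDet (v : Fin n → R) (e : Fin n → ℕ) : R :=
  (Matrix.of fun i j => v i ^ e j).det

theorem map_powDet (φ : R →+* S) (v : Fin n → R) (e : Fin n → ℕ) :
    φ (powDet v e) = powDet (φ ∘ v) e := by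
  rw [powDet, RingHom.map_det, powDet]
  congr 1
  ext i j
  simp

theorem powDet_cons (a : R) (v : Fin n → R) (e : Fin (n + 1) → ℕ) :
    powDet (Fin.cons a v) e =
      ∑ j : Fin (n + 1), (-1) ^ (j : ℕ) * a ^ e j * powDet v (e ∘ j.succAbove) := by
  rw [powDet, Matrix.det_succ_row_zero]
  rfl

/-- The Moore determinant for `q = 2`. -/
noncomputable def moore (v : Fin n → R) : R :=
  powDet v fun j => 2 ^ (j : ℕ)

theorem sum_smul_pow_two_pow [Algebra (ZMod 2) R] [CharP R 2] (v : Fin n → R)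
    (β : Fin n → ZMod 2) (j : ℕ) :
    (∑ i, β i • v i) ^ 2 ^ j = ∑ i, β i • v i ^ 2 ^ j := by
  simp_rw [sum_pow_char_pow, smul_pow, ZMod.pow_card_pow]

theorem moore_cons_sum_smul_eq_zero [Algebra (ZMod 2) R] (v : Fin n → R) (β : Fin n → ZMod 2) :
    moore (Fin.cons (∑ i, β i • v i) v) = 0 := by
  nontriviality R
  have : CharP R 2 := charP_of_injective_algebraMap' (ZMod 2) 2
  set A : Matrix (Fin (n + 1)) (Fin (n + 1)) R :=
    Matrix.of fun i j => (Fin.cons (∑ i, β i • v i) v : Fin (n + 1) → R) i ^ 2 ^ (j : ℕ)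
  set c : Fin (n + 1) → R := Fin.cons 0 fun i => algebraMap (ZMod 2) R (β i)
  -- by Frobenius additivity, row `0` is the combination `∑ βᵢ • row (i + 1)`
  have row_zero : ∑ r, c r • A r = A 0 := by
    ext j
    simp only [A, c, Matrix.of_apply, Fin.sum_univ_succ, Fin.cons_zero, Fin.cons_succ, zero_smul,
      zero_add, Finset.sum_apply, Pi.smul_apply, algebraMap_smul, sum_smul_pow_two_pow]
  have det_eq := Matrix.det_updateRow_sum A 0 c
  rw [row_zero, Matrix.updateRow_eq_self] at det_eq
  rw [moore, powDet]
  simpa [c] using det_eq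

theorem moore_cons_X_eq_sum [CharP R 2] (v : Fin n → R) :
    moore (Fin.cons Polynomial.X (Polynomial.C ∘ v)) =
      ∑ j : Fin (n + 1), Polynomial.C (powDet v fun j' => 2 ^ (j.succAbove j' : ℕ)) *
        Polynomial.X ^ 2 ^ (j : ℕ) := by
  rw [moore, powDet_cons]
  refine Finset.sum_congr rfl fun j _ => ?_
  rw [CharTwo.neg_eq, one_pow, one_mul, mul_comm, ← map_powDet]
  rfl

theorem moore_cons_eq_mul_prod [IsDomain R] [Algebra (ZMod 2) R] {v : Fin n → R}
    (hv : LinearIndependent (ZMod 2) v) (t : R) :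
    moore (Fin.cons t v) = moore v * ∏ β : Fin n → ZMod 2, (t - ∑ i, β i • v i) := by
  have : CharP R 2 := charP_of_injective_algebraMap' (ZMod 2) 2
  open Polynomial in
  set f : R[X] := moore (Fin.cons X (C ∘ v)) with hf_def
  have eval_f (s : R) : f.eval s = moore (Fin.cons s v) := by
    rw [hf_def, moore, ← coe_evalRingHom, map_powDet, moore]
    congr 1
    ext i
    refine Fin.cases ?_ (fun i => ?_) i <;> simp
  have card : Fintype.card (Fin n → ZMod 2) = 2 ^ n := by simp
  have natDegree_f : f.natDegree ≤ 2 ^ n := by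
    rw [hf_def, moore_cons_X_eq_sum]
    refine natDegree_sum_le_of_forall_le _ _ fun j _ => (natDegree_C_mul_X_pow_le _ _).trans ?_
    exact Nat.pow_le_pow_right two_pos (Nat.lt_succ_iff.mp j.isLt)
  have coeff_f : f.coeff (2 ^ n) = moore v := by
    rw [hf_def, moore_cons_X_eq_sum, finsetSum_coeff, Finset.sum_eq_single (Fin.last n)]
    · simp [moore, Fin.succAbove_last]
    · intro j _ hj
      rw [coeff_C_mul_X_pow, if_neg]
      exact fun h => hj (Fin.ext (by simpa using (Nat.pow_right_injective le_rfl h).symm))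
    · simp
  have hf := eq_C_coeff_mul_prod_X_sub_C (p := f)
    hv.fintypeLinearCombination_injective (card ▸ natDegree_f)
    (fun β => by rw [eval_f, Fintype.linearCombination_apply, moore_cons_sum_smul_eq_zero])
  rw [← eval_f, hf, card, coeff_f, Polynomial.eval_mul, Polynomial.eval_C, Polynomial.eval_prod]
  simp [Fintype.linearCombination_apply, Polynomial.eval_finsetSum]

end PowDet

theorem prod_filter_ne_zero_fin_cons {M : Type*} [CommMonoid M] {n : ℕ}
    (f : (Fin (n + 1) → ZMod 2) → M) :
    ∏ α ∈ Finset.univ.filter (fun α : Fin (n + 1) → ZMod 2 => α ≠ 0), f α =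
      (∏ β ∈ Finset.univ.filter (fun β : Fin n → ZMod 2 => β ≠ 0), f (Fin.cons 0 β)) *
        ∏ β, f (Fin.cons 1 β) := by
  rw [Finset.prod_filter, Finset.prod_filter, ← (Fin.consEquiv fun _ => ZMod 2).prod_comp,
    Fintype.prod_prod_type, show (Finset.univ : Finset (ZMod 2)) = {0, 1} from rfl,
    Finset.prod_pair zero_ne_one]
  have cons_eq_zero_iff (a : ZMod 2) (β : Fin n → ZMod 2) :
      (Fin.cons a β : Fin (n + 1) → ZMod 2) = 0 ↔ a = 0 ∧ β = 0 :=
    Matrix.cons_eq_zero_iff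
  simp [Fin.consEquiv, cons_eq_zero_iff]

theorem moore_X_eq_prod (k : ℕ) :
    moore (X : Fin k → MvPolynomial (Fin k) (ZMod 2)) =
      ∏ α ∈ Finset.univ.filter (fun α : Fin k → ZMod 2 => α ≠ 0), ∑ i, α i • X i := by
  induction k with
  | zero =>
    refine Matrix.det_fin_zero.trans (Finset.prod_eq_one fun α hα => ?_).symm
    exact absurd (Subsingleton.elim α 0) (Finset.mem_filter.mp hα).2
  | succ k ih =>
    have moore_X_succ :
        moore (fun i : Fin k => (X i.succ : MvPolynomial (Fin (k + 1)) (ZMod 2))) =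
          ∏ β ∈ Finset.univ.filter (fun β : Fin k → ZMod 2 => β ≠ 0), ∑ i, β i • X i.succ := by
      have := congrArg (rename Fin.succ) ih
      rw [moore, ← AlgHom.coe_toRingHom, map_powDet] at this
      simpa [map_prod, Function.comp_def, moore] using this
    have cons_X : (X : Fin (k + 1) → MvPolynomial (Fin (k + 1)) (ZMod 2)) =
        Fin.cons (X 0) fun i => X i.succ :=
      (Fin.cons_self_tail X).symm
    conv_lhs => rw [cons_X]
    rw [moore_cons_eq_mul_prod (v := fun i => X i.succ)
      ((linearIndependent_X _ _).comp _ (Fin.succ_injective _)), moore_X_succ,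
      prod_filter_ne_zero_fin_cons]
    simp [Fin.sum_univ_succ, CharTwo.sub_eq_add]

theorem stmt1_general (k : ℕ) :
    D k = ∏ α ∈ Finset.univ.filter (fun α : Fin k → ZMod 2 => α ≠ 0),
      ∑ i, C (α i) * X i := by
  rw [show D k = moore X from rfl, moore_X_eq_prod]
  simp only [smul_eq_C_mul]

theorem stmt1 (k : ℕ) (hk : 1 ≤ k) :
    D k = ∏ α ∈ Finset.univ.filter (fun α : Fin k → ZMod 2 => α ≠ 0),
      ∑ i, C (α i) * X i :=
  stmt1_general k
end

section
/- Let k ≥ 1 and let t_1 < t_2 < ⋯ < t_k be natural numbers. Then D = V(2^0,2^1,…,2^{k−1}) divides V(2^{t_1},…,2^{t_k}) in F₂[x_1,…,x_k]. -/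
open MvPolynomial

/-! Over `F₂`, every nonzero linear form `ℓ = ∑ cᵢ xᵢ` divides `V(2^{t₁}, …, 2^{t_k})`: adding up
the rows with coefficients `cᵢ` gives the row `(ℓ^{2^{t_j}})_j`, because the Frobenius is additive
and fixes `cᵢ`. The `2^k - 1` nonzero linear forms are pairwise non-associated primes, so their
product `P` divides every such determinant, `D` among them. Since `D ≠ 0` is homogeneous of degree
`1 + 2 + ⋯ + 2^{k-1} = deg P`, the quotient `D / P` is a unit, so `D ∣ P`. -/

namespace Matrix

theorem dvd_det_of_dvd_sum_mul_rows {n R : Type*} [Fintype n] [DecidableEq n] [CommRing R]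
    (A : Matrix n n R) (c : n → R) {j : n} (hj : IsUnit (c j)) {a : R}
    (h : ∀ l, a ∣ ∑ k, c k * A k l) : a ∣ A.det := by
  choose v hv using h
  have hrow : ∑ k, c k • A k = a • v := funext fun l => by simp [Finset.sum_apply, hv l]
  rw [← hj.dvd_mul_left, ← smul_eq_mul, ← det_updateRow_sum, hrow, det_updateRow_smul]
  exact dvd_mul_right _ _

end Matrix

namespace MvPolynomial

variable {σ : Type*}

section CommRing

variable {R : Type*} [CommRing R]

-- Over `F₂` this makes distinct primes non-associated, as `Finset.prod_primes_dvd` requires.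
instance [IsReduced R] [Subsingleton Rˣ] : Subsingleton (MvPolynomial σ R)ˣ where
  allEq u v := Units.ext <| by
    obtain ⟨r, hr, hu⟩ := isUnit_iff_eq_C_of_isReduced.mp u.isUnit
    obtain ⟨s, hs, hv⟩ := isUnit_iff_eq_C_of_isReduced.mp v.isUnit
    rw [hu, hv, ← hr.unit_spec, ← hs.unit_spec, Subsingleton.elim hr.unit hs.unit]

theorem sumSMulX_injective : Function.Injective (sumSMulX : (σ →₀ R) → MvPolynomial σ R) := by
  intro c d h
  ext i
  simpa [coeff_sumSMulX] using congrArg (coeff (Finsupp.single i 1)) h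

variable [Fintype σ]

theorem sumSMulX_eq_sum (c : σ →₀ R) : sumSMulX c = ∑ i, C (c i) * X i := by
  simp [sumSMulX, Finsupp.linearCombination_apply, Finsupp.sum_fintype, smul_eq_C_mul]

theorem isHomogeneous_sumSMulX (c : σ →₀ R) : (sumSMulX c).IsHomogeneous 1 := by
  rw [sumSMulX_eq_sum]
  exact IsHomogeneous.sum _ _ _ fun i _ => isHomogeneous_C_mul_X _ _

variable (R) in
noncomputable def genVandermonde (e : σ → ℕ) : Matrix σ σ (MvPolynomial σ R) :=
  Matrix.of fun i j => X i ^ e j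

variable [DecidableEq σ]

theorem isHomogeneous_det_genVandermonde (e : σ → ℕ) :
    (genVandermonde R e).det.IsHomogeneous (∑ j, e j) := by
  rw [Matrix.det_apply]
  refine IsHomogeneous.sum _ _ _ fun τ _ => ?_
  have hprod : ∏ i, (X (τ i) : MvPolynomial σ R) ^ e i ∈ homogeneousSubmodule σ R (∑ j, e j) :=
    IsHomogeneous.prod _ _ _ fun i _ => isHomogeneous_X_pow (τ i) (e i)
  simpa only [Units.smul_def, genVandermonde, Matrix.of_apply, mem_homogeneousSubmodule]
    using zsmul_mem hprod (τ.sign : ℤ)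

-- The diagonal monomial `∏ xᵢ ^ eᵢ` occurs only in the term of the identity permutation.
theorem det_genVandermonde_ne_zero [Nontrivial R] {e : σ → ℕ} (he : Function.Injective e) :
    (genVandermonde R e).det ≠ 0 := by
  have hdet : (genVandermonde R e).det =
      ∑ τ : Equiv.Perm σ, monomial (∑ i, Finsupp.single (τ i) (e i)) (τ.sign • (1 : R)) := by
    simp [Matrix.det_apply, genVandermonde, X_pow_eq_monomial, monomial_sum_one]
  have hexp (τ : Equiv.Perm σ)
      (hτ : ∑ i, Finsupp.single (τ i) (e i) = ∑ i, Finsupp.single i (e i)) : τ = 1 := by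
    ext j
    have := congrArg (· (τ j)) hτ
    simp [Finsupp.finsetSum_apply, Finsupp.single_apply, τ.injective.eq_iff] at this
    simpa using (he this).symm
  intro h
  have := congrArg (coeff (∑ i, Finsupp.single i (e i))) h
  rw [hdet, coeff_sum, Finset.sum_eq_single 1] at this
  · simp at this
  · intro τ _ hτ
    rw [coeff_monomial, if_neg (mt (hexp τ) hτ)]
  · simp

end CommRing

section Field

variable {K : Type*} [Field K]

theorem associated_of_dvd_of_totalDegree_le {p q : MvPolynomial σ K} (hpq : p ∣ q) (hq : q ≠ 0)
    (hdeg : q.totalDegree ≤ p.totalDegree) : Associated p q := by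
  obtain ⟨r, rfl⟩ := hpq
  have hr : r ≠ 0 := right_ne_zero_of_mul hq
  rw [totalDegree_mul_of_isDomain (left_ne_zero_of_mul hq) hr] at hdeg
  have hr0 : r = C (r.coeff 0) := totalDegree_eq_zero_iff_eq_C.mp (by omega)
  have hunit : IsUnit r := by
    rw [hr0]
    exact (Ne.isUnit fun h => hr (by rw [hr0, h, C_0])).map C
  exact ⟨hunit.unit, rfl⟩

theorem prime_sumSMulX {c : σ →₀ K} (hc : c ≠ 0) : Prime (sumSMulX c) := by
  obtain ⟨j, hj⟩ := Finsupp.ne_iff.mp hc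
  refine (irreducible_sumSMulX c ⟨j, Finsupp.mem_support_iff.mpr hj⟩ fun r hr => ?_).prime
  exact isUnit_iff_ne_zero.mpr (by rintro rfl; exact hj (zero_dvd_iff.mp (hr j)))

end Field

section ZMod

variable {p : ℕ} [hp : Fact p.Prime]

theorem expand_pow_zmod (f : MvPolynomial σ (ZMod p)) (n : ℕ) : expand (p ^ n) f = f ^ p ^ n := by
  induction n with
  | zero => simp
  | succ n ih => rw [pow_succ, pow_mul, ← ih, ← expand_zmod, ← expand_mul, mul_comm]

theorem sumSMulX_dvd_det_genVandermonde_prime_pow [Fintype σ] [DecidableEq σ]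
    {c : σ →₀ ZMod p} (hc : c ≠ 0) (t : σ → ℕ) :
    sumSMulX c ∣ (genVandermonde (ZMod p) fun j => p ^ t j).det := by
  obtain ⟨j, hj⟩ := Finsupp.ne_iff.mp hc
  refine Matrix.dvd_det_of_dvd_sum_mul_rows _ (fun i => C (c i)) (j := j)
    ((Ne.isUnit hj).map C) fun l => ?_
  have hrow : sumSMulX c ^ p ^ t l = ∑ i, C (c i) * (X i : MvPolynomial σ (ZMod p)) ^ p ^ t l := by
    rw [← expand_pow_zmod, sumSMulX_eq_sum, map_sum]
    simp only [map_mul, expand_C, expand_X]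
  exact hrow ▸ dvd_pow_self _ (pow_ne_zero _ hp.out.ne_zero)

end ZMod

section Two

variable (σ) [Fintype σ] [DecidableEq σ]

noncomputable def prodNonzeroLinearForms : MvPolynomial σ (ZMod 2) :=
  ∏ c ∈ Finset.univ.erase (0 : σ →₀ ZMod 2), sumSMulX c

theorem totalDegree_prodNonzeroLinearForms :
    (prodNonzeroLinearForms σ).totalDegree = 2 ^ Fintype.card σ - 1 := by
  have hcard : (Finset.univ.erase (0 : σ →₀ ZMod 2)).card = 2 ^ Fintype.card σ - 1 := by
    rw [Finset.card_erase_of_mem (Finset.mem_univ _), Finset.card_univ,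
      Fintype.card_congr Finsupp.equivFunOnFinite, Fintype.card_fun, ZMod.card]
  have hhom := IsHomogeneous.prod (Finset.univ.erase (0 : σ →₀ ZMod 2)) sumSMulX _
    fun c _ => isHomogeneous_sumSMulX c
  rw [Finset.sum_const, smul_eq_mul, mul_one, hcard] at hhom
  refine hhom.totalDegree (Finset.prod_ne_zero_iff.mpr fun c hc => ?_)
  exact (prime_sumSMulX (Finset.ne_of_mem_erase hc)).ne_zero

variable {σ}

theorem prodNonzeroLinearForms_dvd_det_genVandermonde_two_pow (t : σ → ℕ) :
    prodNonzeroLinearForms σ ∣ (genVandermonde (ZMod 2) fun j => 2 ^ t j).det := by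
  have key := Finset.prod_primes_dvd (s := (Finset.univ.erase (0 : σ →₀ ZMod 2)).image sumSMulX)
    (genVandermonde (ZMod 2) fun j => 2 ^ t j).det
    (by simpa using fun c hc => prime_sumSMulX hc)
    (by simpa using fun c hc => sumSMulX_dvd_det_genVandermonde_prime_pow hc t)
  rwa [Finset.prod_image fun _ _ _ _ h => sumSMulX_injective h] at key

end Two

end MvPolynomial

theorem stmt2_general (k : ℕ) (t : Fin k → ℕ) :
    D k ∣ Vdm k (fun i => 2 ^ t i) := by
  have hP := prodNonzeroLinearForms_dvd_det_genVandermonde_two_pow (σ := Fin k)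
  have hD : D k ∣ prodNonzeroLinearForms (Fin k) := by
    have hD0 : D k ≠ 0 :=
      det_genVandermonde_ne_zero ((Nat.pow_right_injective le_rfl).comp Fin.val_injective)
    have hdeg : (D k).totalDegree ≤ 2 ^ k - 1 := by
      refine (isHomogeneous_det_genVandermonde _).totalDegree_le.trans_eq ?_
      simp [Fin.sum_univ_eq_sum_range (fun i => 2 ^ i), Nat.geomSum_eq]
    refine (associated_of_dvd_of_totalDegree_le (hP fun j => j) hD0 ?_).symm.dvd
    rwa [totalDegree_prodNonzeroLinearForms, Fintype.card_fin]
  exact hD.trans (hP t)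

theorem stmt2 (k : ℕ) (hk : 1 ≤ k) (t : Fin k → ℕ) (ht : StrictMono t) :
    D k ∣ Vdm k (fun i => 2 ^ t i) :=
  stmt2_general k t
end

section
/- Let k ≥ 1 and ℓ ≥ k. Then for every i ∈ {1,…,k}, the identity ∑_{j=0}^{k−1} N(ℓ,j)·x_i^{2^j} = D·x_i^{2^ℓ} holds in F₂[x_1,…,x_k]. (This expresses that the quotient polynomials p_{ℓ,j} = N(ℓ,j)/D solve the Cramer system of Theorem 1.) -/
open MvPolynomial

/-!
Border the matrix `(x_a ^ 2^b)` with the repeated row `x_i` and the extra exponent `2^ℓ`. The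
resulting `(k+1) × (k+1)` determinant vanishes, and in characteristic 2 its Laplace expansion along
the repeated row is exactly the difference of the two sides of the identity.
-/

section LaplaceRepeatedRow

variable {R : Type*} [CommRing R] {n : ℕ}

theorem sum_neg_one_pow_mul_pow_mul_det_eq_zero (x : Fin n → R) (t : Fin (n + 1) → ℕ)
    (i : Fin n) :
    ∑ j : Fin (n + 1), (-1) ^ (n + (j : ℕ)) * x i ^ t j *
      (Matrix.of fun a b => x a ^ t (j.succAbove b)).det = 0 := by
  let A : Matrix (Fin (n + 1)) (Fin (n + 1)) R :=
    Matrix.of fun r c => Fin.snoc (α := fun _ => R) x (x i) r ^ t c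
  have hA : A.det = 0 :=
    Matrix.det_zero_of_row_eq (Fin.castSucc_lt_last i).ne <| by
      funext c; simp [A]
  have hminor (j : Fin (n + 1)) : A.submatrix (Fin.last n).succAbove j.succAbove =
      Matrix.of fun a b => x a ^ t (j.succAbove b) := by
    ext; simp [A]
  rw [Matrix.det_succ_row A (Fin.last n)] at hA
  simp_rw [hminor] at hA
  simpa [A] using hA

theorem sum_pow_mul_det_eq_zero_of_charTwo [CharP R 2] (x : Fin n → R) (t : Fin (n + 1) → ℕ)
    (i : Fin n) :
    ∑ j : Fin (n + 1), x i ^ t j * (Matrix.of fun a b => x a ^ t (j.succAbove b)).det = 0 := by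
  simpa [CharTwo.neg_eq] using sum_neg_one_pow_mul_pow_mul_det_eq_zero x t i

end LaplaceRepeatedRow

theorem vdm_snoc_comp_succAbove_last (k ℓ : ℕ) :
    Vdm k (Fin.snoc (fun c : Fin k => 2 ^ (c : ℕ)) (2 ^ ℓ) ∘ (Fin.last k).succAbove) = D k := by
  simp [D, Fin.succAbove_last]

theorem vdm_snoc_comp_succAbove_castSucc (k ℓ : ℕ) (j : Fin k) :
    Vdm k (Fin.snoc (fun c : Fin k => 2 ^ (c : ℕ)) (2 ^ ℓ) ∘ (Fin.castSucc j).succAbove) =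
      N k ℓ j := by
  unfold N
  congr 1
  funext b
  rcases lt_or_ge b j with hbj | hjb
  · rw [Function.comp_apply, Fin.succAbove_castSucc_of_lt _ _ hbj]
    simp [hbj, show (b : ℕ) + 1 < k by omega]
  · rw [Function.comp_apply, Fin.succAbove_castSucc_of_le _ _ hjb]
    have hbj : ¬ (b : ℕ) < j := by omega
    by_cases hb : (b : ℕ) + 1 < k
    · rw [show b.succ = Fin.castSucc ⟨b + 1, hb⟩ from Fin.ext rfl]
      simp only [Fin.snoc_castSucc, hb, hbj, if_true, if_false]
    · rw [show b.succ = Fin.last k from Fin.ext (by simp; omega)]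
      simp [hb]

theorem stmt3_general (k ℓ : ℕ) (i : Fin k) :
    ∑ j ∈ Finset.range k, N k ℓ j * X i ^ (2 ^ j) = D k * X i ^ (2 ^ ℓ) := by
  set t : Fin (k + 1) → ℕ := Fin.snoc (fun c : Fin k => 2 ^ (c : ℕ)) (2 ^ ℓ)
  have h := sum_pow_mul_det_eq_zero_of_charTwo (X : Fin k → MvPolynomial (Fin k) (ZMod 2)) t i
  rw [Fin.sum_univ_castSucc, CharTwo.add_eq_zero] at h
  change ∑ j : Fin k, _ * Vdm k (t ∘ _) = _ * Vdm k (t ∘ _) at h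
  simp only [vdm_snoc_comp_succAbove_castSucc, vdm_snoc_comp_succAbove_last, t,
    Fin.snoc_castSucc, Fin.snoc_last] at h
  rw [Finset.sum_range fun j => N k ℓ j * X i ^ 2 ^ j, mul_comm (D k)]
  simpa only [mul_comm] using h

theorem stmt3 (k ℓ : ℕ) (hk : 1 ≤ k) (hℓ : k ≤ ℓ) (i : Fin k) :
    ∑ j ∈ Finset.range k, N k ℓ j * X i ^ (2 ^ j) = D k * X i ^ (2 ^ ℓ) :=
  stmt3_general k ℓ i
end

section
/- Let k = 3 and ℓ ≥ 3. Let P ∈ F₂[x_1,x_2,x_3] be the polynomial whose coefficient on the monomial x_1^a x_2^b x_3^c equals binom(b'+c', c') mod 2 if a'+b'+c' = 2^ℓ−1 and c' ≥ 1, and equals 0 otherwise. Then D·P = N(ℓ,0). (This is the formula p_{ℓ,0} = ∑_{i≥j≥m>0, i+j+m=2^ℓ−1} binom(j+m,m)·m_{i,j,m} of Theorem 2.) -/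
open MvPolynomial

/-- The nonincreasing rearrangement `(a', b', c')` of `(a, b, c)`. -/
def sort3 (a b c : ℕ) : ℕ × ℕ × ℕ :=
  (max a (max b c), a + b + c - max a (max b c) - min a (min b c), min a (min b c))


/-!
Over `F₂` the Moore determinant `D = V(1, 2, 4)` is the product of the seven nonzero linear
forms `L_v = ∑ vᵢ xᵢ`, and `P = ∑_v L_v ^ (2^ℓ - 1)`: the coefficient of `x^s` in
`∑_{v ∈ F₂³} L_v ^ n` is the multinomial coefficient of `s` times the number of `v` whose support
contains that of `s`, which is odd only when every `sᵢ` is positive; for `n = 2^ℓ - 1` the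
multinomial coefficient is `binom(b' + c', c')` mod 2 because `binom(2^ℓ - 1, k)` is odd.
Hence `D * P = ∑_v L_v ^ (2^ℓ) * (D / L_v)`. The Frobenius power is additive, so
`L_v ^ (2^ℓ) = ∑_{vᵢ = 1} xᵢ ^ (2^ℓ)`, and collecting the coefficient of each `xᵢ ^ (2^ℓ)` gives
the cofactors of the last column of `V(2, 4, 2^ℓ) = N(ℓ, 0)`.
-/

open Finset
open scoped Nat

theorem cast_choose_prime_pow_sub_one {p : ℕ} [hp : Fact p.Prime] (ℓ : ℕ) :
    ∀ k < p ^ ℓ, ((p ^ ℓ - 1).choose k : ZMod p) = (-1) ^ k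
  | 0, _ => by simp
  | k + 1, hk => by
    have hpascal :
        (p ^ ℓ).choose (k + 1) = (p ^ ℓ - 1).choose k + (p ^ ℓ - 1).choose (k + 1) := by
      rw [← Nat.choose_succ_succ', Nat.sub_add_cancel (Nat.one_le_pow _ _ hp.out.pos)]
    have hdvd : ((p ^ ℓ).choose (k + 1) : ZMod p) = 0 :=
      (ZMod.natCast_eq_zero_iff _ _).2 (hp.out.dvd_choose_pow k.succ_ne_zero hk.ne)
    rw [hpascal, Nat.cast_add, cast_choose_prime_pow_sub_one ℓ k (by omega)] at hdvd
    linear_combination hdvd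

theorem multinomial_univ_three_eq_choose_mul_choose (a b c : ℕ) :
    Nat.multinomial univ ![a, b, c] = (a + b + c).choose a * (b + c).choose c := by
  rw [Nat.multinomial_univ_three]
  refine Nat.div_eq_of_eq_mul_left (by positivity) ?_
  have hbc := Nat.add_choose_mul_factorial_mul_factorial b c
  have habc := Nat.add_choose_mul_factorial_mul_factorial (b + c) a
  rw [add_comm (b + c) a, ← add_assoc] at habc
  rw [← habc, ← hbc]
  ring

theorem cast_multinomial_univ_three_of_add_eq {ℓ a b c : ℕ} (h : a + b + c = 2 ^ ℓ - 1) :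
    (Nat.multinomial univ ![a, b, c] : ZMod 2) = (b + c).choose c := by
  rw [multinomial_univ_three_eq_choose_mul_choose, Nat.cast_mul, h,
    cast_choose_prime_pow_sub_one ℓ a (by have := ℓ.one_le_two_pow; omega)]
  simp

theorem sort3_cases (a b c : ℕ) :
    sort3 a b c = (a, b, c) ∨ sort3 a b c = (a, c, b) ∨ sort3 a b c = (b, a, c) ∨
      sort3 a b c = (b, c, a) ∨ sort3 a b c = (c, a, b) ∨ sort3 a b c = (c, b, a) := by
  simp only [sort3, Prod.mk.injEq]
  omega

theorem multinomial_sort3 (a b c : ℕ) :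
    Nat.multinomial univ ![(sort3 a b c).1, (sort3 a b c).2.1, (sort3 a b c).2.2] =
      Nat.multinomial univ ![a, b, c] := by
  simp only [Nat.multinomial_univ_three]
  rcases sort3_cases a b c with h | h | h | h | h | h <;> rw [h] <;> ring_nf

section LinearForms

variable {σ : Type*} [Fintype σ]

noncomputable def linForm (v : σ → ZMod 2) : MvPolynomial σ (ZMod 2) := ∑ i, v i • X i

theorem sum_zmod_two {M : Type*} [AddCommMonoid M] (g : ZMod 2 → M) : ∑ t, g t = g 0 + g 1 :=
  Fin.sum_univ_two g

theorem sum_pow_zmod_two (k : ℕ) : ∑ t : ZMod 2, t ^ k = if k ≠ 0 then 1 else 0 := by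
  rcases k with _ | k
  · decide
  · simp [sum_zmod_two]

theorem sum_prod_pow_zmod_two [DecidableEq σ] (s : σ → ℕ) :
    ∑ v : σ → ZMod 2, ∏ i, v i ^ s i = if ∀ i, s i ≠ 0 then 1 else 0 := by
  simp_rw [← Fintype.prod_sum (fun i (t : ZMod 2) => t ^ s i), sum_pow_zmod_two]
  exact Fintype.prod_boole

theorem coeff_sum_linForm_pow [DecidableEq σ] (s : σ →₀ ℕ) (n : ℕ) :
    coeff s (∑ v : σ → ZMod 2, linForm v ^ n) =
      if s.sum (fun _ m ↦ m) = n ∧ ∀ i, s i ≠ 0 then (s.multinomial : ZMod 2) else 0 := by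
  simp only [linForm, coeff_sum, coeff_linearCombination_X_pow_of_fintype]
  by_cases hn : s.sum (fun _ m ↦ m) = n
  · simp only [hn, if_true, true_and, ← mul_sum, Finsupp.prod_fintype _ _ (fun _ => pow_zero _),
      sum_prod_pow_zmod_two, mul_ite, mul_one, mul_zero]
  · simp [hn]

theorem sum_fin_three_zmod_two {M : Type*} [AddCommMonoid M] (f : (Fin 3 → ZMod 2) → M) :
    ∑ v, f v = f ![0, 0, 0] + f ![0, 0, 1] + f ![0, 1, 0] + f ![0, 1, 1] + f ![1, 0, 0]
      + f ![1, 0, 1] + f ![1, 1, 0] + f ![1, 1, 1] := by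
  simp only [← (Fin.consEquiv fun _ => ZMod 2).sum_comp, Fintype.sum_prod_type, sum_zmod_two,
    Fintype.sum_unique, add_assoc]
  rfl

theorem sum_linForm_pow_fin_three {n : ℕ} (hn : n ≠ 0) :
    ∑ v : Fin 3 → ZMod 2, linForm v ^ n =
      X 0 ^ n + X 1 ^ n + X 2 ^ n + (X 0 + X 1) ^ n + (X 0 + X 2) ^ n + (X 1 + X 2) ^ n
        + (X 0 + X 1 + X 2) ^ n := by
  rw [sum_fin_three_zmod_two]
  simp only [linForm, Fin.sum_univ_three, Matrix.cons_val, zero_smul, one_smul, zero_pow hn,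
    add_zero, zero_add]
  ring

theorem coeff_sum_linForm_pow_fin_three (ℓ : ℕ) (s : Fin 3 →₀ ℕ) :
    coeff s (∑ v : Fin 3 → ZMod 2, linForm v ^ (2 ^ ℓ - 1)) =
      if s 0 + s 1 + s 2 = 2 ^ ℓ - 1 ∧ 1 ≤ (sort3 (s 0) (s 1) (s 2)).2.2 then
        (Nat.choose ((sort3 (s 0) (s 1) (s 2)).2.1 + (sort3 (s 0) (s 1) (s 2)).2.2)
          (sort3 (s 0) (s 1) (s 2)).2.2 : ZMod 2)
      else 0 := by
  have hdeg : s.sum (fun _ m ↦ m) = s 0 + s 1 + s 2 := by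
    simp [Finsupp.sum_fintype, Fin.sum_univ_three]
  have hpos : (∀ i, s i ≠ 0) ↔ 1 ≤ (sort3 (s 0) (s 1) (s 2)).2.2 := by
    refine ⟨fun h => ?_, fun h i => ?_⟩
    · have := h 0; have := h 1; have := h 2
      simp only [sort3]
      omega
    · simp only [sort3] at h
      fin_cases i <;> simp only [Fin.zero_eta, Fin.mk_one, Fin.reduceFinMk] <;> omega
  have hmult : s.multinomial = Nat.multinomial univ ![s 0, s 1, s 2] := by
    rw [Finsupp.multinomial_eq_of_support_subset (subset_univ _)]
    congr
    ext i
    fin_cases i <;> rfl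
  simp only [coeff_sum_linForm_pow, hdeg, hpos, hmult]
  rw [← multinomial_sort3]
  split_ifs with h
  · refine cast_multinomial_univ_three_of_add_eq (ℓ := ℓ) ?_
    rw [← h.1]
    simp only [sort3]
    omega
  · rfl

end LinearForms

section CharTwo

variable {R : Type*} [CommRing R] [CharP R 2]

theorem det_moore_fin_three (x : Fin 3 → R) :
    (Matrix.of fun i j : Fin 3 => x i ^ 2 ^ (j : ℕ)).det =
      x 0 * x 1 * x 2 * (x 0 + x 1) * (x 0 + x 2) * (x 1 + x 2) * (x 0 + x 1 + x 2) := by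
  simp only [Matrix.det_fin_three, Matrix.of_apply, Fin.isValue, Fin.val_zero, Fin.val_one,
    Fin.val_two, pow_zero, pow_one]
  ring_nf
  reduce_mod_char!

/-- `a`, `b`, `c` stand for `x ^ q`, `y ^ q`, `z ^ q` with `q` a power of 2: each nonzero linear
form in `x, y, z` is weighted by its Frobenius image and multiplied by the other six forms. -/
theorem moore_cofactor_identity (x y z a b c : R) :
    a * (y * z * (x + y) * (x + z) * (y + z) * (x + y + z))
      + b * (x * z * (x + y) * (x + z) * (y + z) * (x + y + z))
      + c * (x * y * (x + y) * (x + z) * (y + z) * (x + y + z))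
      + (a + b) * (x * y * z * (x + z) * (y + z) * (x + y + z))
      + (a + c) * (x * y * z * (x + y) * (y + z) * (x + y + z))
      + (b + c) * (x * y * z * (x + y) * (x + z) * (x + y + z))
      + (a + b + c) * (x * y * z * (x + y) * (x + z) * (y + z)) =
    a * (y ^ 2 * z ^ 4 + y ^ 4 * z ^ 2) + b * (x ^ 2 * z ^ 4 + x ^ 4 * z ^ 2)
      + c * (x ^ 2 * y ^ 4 + x ^ 4 * y ^ 2) := by
  ring_nf
  reduce_mod_char!

theorem prod_mul_sum_pow_two_pow_sub_one (ℓ : ℕ) (x y z : R) :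
    x * y * z * (x + y) * (x + z) * (y + z) * (x + y + z) *
        (x ^ (2 ^ ℓ - 1) + y ^ (2 ^ ℓ - 1) + z ^ (2 ^ ℓ - 1) + (x + y) ^ (2 ^ ℓ - 1)
          + (x + z) ^ (2 ^ ℓ - 1) + (y + z) ^ (2 ^ ℓ - 1) + (x + y + z) ^ (2 ^ ℓ - 1)) =
      x ^ 2 ^ ℓ * (y ^ 2 * z ^ 4 + y ^ 4 * z ^ 2) + y ^ 2 ^ ℓ * (x ^ 2 * z ^ 4 + x ^ 4 * z ^ 2)
        + z ^ 2 ^ ℓ * (x ^ 2 * y ^ 4 + x ^ 4 * y ^ 2) := by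
  have frob (a b : R) : (a + b) ^ 2 ^ ℓ = a ^ 2 ^ ℓ + b ^ 2 ^ ℓ := add_pow_char_pow ..
  obtain ⟨T, hT⟩ : ∃ T, 2 ^ ℓ = T + 1 := ⟨2 ^ ℓ - 1, (Nat.sub_add_cancel ℓ.one_le_two_pow).symm⟩
  rw [hT] at frob ⊢
  rw [Nat.add_sub_cancel]
  linear_combination (x * y * z * (x + z) * (y + z) * (x + y + z)) * frob x y
    + (x * y * z * (x + y) * (y + z) * (x + y + z)) * frob x z
    + (x * y * z * (x + y) * (x + z) * (x + y + z)) * frob y z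
    + (x * y * z * (x + y) * (x + z) * (y + z)) * (frob (x + y) z + frob x y)
    + moore_cofactor_identity x y z (x ^ (T + 1)) (y ^ (T + 1)) (z ^ (T + 1))

end CharTwo

theorem N_three_zero_eq (ℓ : ℕ) :
    N 3 ℓ 0 = X 0 ^ 2 ^ ℓ * (X 1 ^ 2 * X 2 ^ 4 + X 1 ^ 4 * X 2 ^ 2)
      + X 1 ^ 2 ^ ℓ * (X 0 ^ 2 * X 2 ^ 4 + X 0 ^ 4 * X 2 ^ 2)
      + X 2 ^ 2 ^ ℓ * (X 0 ^ 2 * X 1 ^ 4 + X 0 ^ 4 * X 1 ^ 2) := by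
  simp only [N, Vdm, Matrix.det_fin_three, Matrix.of_apply, CharTwo.sub_eq_add, Fin.isValue,
    Fin.val_zero, Fin.val_one, Fin.val_two]
  norm_num
  ring

theorem stmt5 (ℓ : ℕ) (hℓ : 3 ≤ ℓ) (P : MvPolynomial (Fin 3) (ZMod 2))
    (hP : ∀ a b c : ℕ,
      P.coeff (Finsupp.single 0 a + Finsupp.single 1 b + Finsupp.single 2 c) =
        if a + b + c = 2 ^ ℓ - 1 ∧ 1 ≤ (sort3 a b c).2.2 then
          (Nat.choose ((sort3 a b c).2.1 + (sort3 a b c).2.2) (sort3 a b c).2.2 : ZMod 2)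
        else 0) :
    D 3 * P = N 3 ℓ 0 := by
  have hP' : P = ∑ v : Fin 3 → ZMod 2, linForm v ^ (2 ^ ℓ - 1) := by
    ext s
    rw [coeff_sum_linForm_pow_fin_three, ← hP]
    congr
    ext i
    fin_cases i <;> simp
  have hD : D 3 = X 0 * X 1 * X 2 * (X 0 + X 1) * (X 0 + X 2) * (X 1 + X 2) * (X 0 + X 1 + X 2) :=
    det_moore_fin_three X
  have hT : 2 ^ ℓ - 1 ≠ 0 := by have := Nat.one_lt_two_pow (n := ℓ) (by omega); omega
  rw [hP', sum_linForm_pow_fin_three hT, hD, N_three_zero_eq]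
  exact prod_mul_sum_pow_two_pow_sub_one ℓ _ _ _
end

section
/- Let k ≥ 1 and 0 ≤ j ≤ k−1. Then D·G_{2^k−2^j} = N(k,j) in F₂[x_1,…,x_k]; that is, the quotient polynomial p_{k,j} = N(k,j)/D equals the sum of all monomials of degree 2^k−2^j in x_1,…,x_k in which all nonzero exponents are powers of 2. -/
open MvPolynomial

/-! Expanding `N(k, j)` along its last column, it suffices that every variable satisfies
`x_i^(2^k) = ∑_{c<k} G_{2^k-2^c} x_i^(2^c)`: the last column of `N(k, j)` is then a combination
of the columns `x^(2^c)`, only the missing column `c = j` survives, and permuting columns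
costs no sign in characteristic 2. Since `G_0 = 1`, this identity says that
`∑_{j≤k} G_{2^k-2^j} x_i^(2^j) = 0`. The coefficient of a monomial `μ` of degree `2^k` whose
exponents away from `i` are zero or powers of two counts the `j` such that `μ_i - 2^j` is zero or
a power of two, and this count is even unless `μ_i = 1`. That case cannot occur: the other
`k - 1` exponents would then sum to `2^k - 1`, whose binary digit sum is `k`, while the binary
digit sum is subadditive. -/

open Finset Nat

def ZeroOrTwoPow (n : ℕ) : Prop := n ≠ 0 → ∃ e, n = 2 ^ e

theorem Nat.digits_sum_add_le (p : ℕ) [Fact p.Prime] (a b : ℕ) :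
    (p.digits (a + b)).sum ≤ (p.digits a).sum + (p.digits b).sum := by
  have legendre (n : ℕ) : (p.digits n).sum + (p - 1) * padicValNat p n ! = n := by
    have := sub_one_mul_padicValNat_factorial (p := p) n
    have := Nat.digit_sum_le p n
    omega
  have hdvd : padicValNat p (a ! * b !) ≤ padicValNat p (a + b)! :=
    (padicValNat_dvd_iff_le (Nat.factorial_ne_zero _)).mp
      (pow_padicValNat_dvd.trans (Nat.factorial_mul_factorial_dvd_factorial_add a b))
  rw [padicValNat.mul (Nat.factorial_ne_zero _) (Nat.factorial_ne_zero _)] at hdvd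
  have hmul := Nat.mul_le_mul_left (p - 1) hdvd
  rw [mul_add] at hmul
  have ha := legendre a
  have hb := legendre b
  have hab := legendre (a + b)
  omega

theorem Nat.digits_two_sum_two_pow (e : ℕ) : (Nat.digits 2 (2 ^ e)).sum = 1 := by
  rw [← mul_one (2 ^ e), Nat.digits_base_pow_mul one_lt_two one_pos]
  simp

theorem Nat.digits_two_sum_two_pow_sub_one (k : ℕ) : (Nat.digits 2 (2 ^ k - 1)).sum = k := by
  induction k with
  | zero => simp
  | succ k ih =>
    have hpos : 0 < 2 ^ k := Nat.two_pow_pos k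
    rw [Nat.digits_def' one_lt_two (by omega), List.sum_cons, pow_succ,
      show (2 ^ k * 2 - 1) / 2 = 2 ^ k - 1 by omega, ih]
    omega

theorem Nat.digits_two_sum_le_card {ι : Type*} (s : Finset ι) (f : ι → ℕ)
    (hf : ∀ l ∈ s, ZeroOrTwoPow (f l)) : (Nat.digits 2 (∑ l ∈ s, f l)).sum ≤ #s := by
  classical
  induction s using Finset.induction_on with
  | empty => simp
  | insert a s ha ih =>
    rw [sum_insert ha, card_insert_of_notMem ha, add_comm #s 1]
    refine (Nat.digits_sum_add_le 2 _ _).trans (add_le_add ?_ (ih ?_))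
    · by_cases h0 : f a = 0
      · simp [h0]
      · obtain ⟨e, he⟩ := hf a (mem_insert_self a s) h0
        rw [he, Nat.digits_two_sum_two_pow]
    · exact fun l hl => hf l (mem_insert_of_mem hl)

theorem sum_ne_two_pow_sub_one_of_card_lt {ι : Type*} {s : Finset ι} {f : ι → ℕ} {k : ℕ}
    (hf : ∀ l ∈ s, ZeroOrTwoPow (f l)) (hs : #s < k) : ∑ l ∈ s, f l ≠ 2 ^ k - 1 := by
  intro h
  have := Nat.digits_two_sum_le_card s f hf
  rw [h, Nat.digits_two_sum_two_pow_sub_one] at this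
  omega

theorem Nat.bitIndices_two_pow_add_two_pow {a b : ℕ} (h : a < b) :
    (2 ^ a + 2 ^ b).bitIndices = [a, b] := by
  simpa using Nat.bitIndices_sum_map_two_pow (L := [a, b])
    (by simp [List.sortedLT_iff_pairwise, h])

theorem Nat.two_pow_add_two_pow_ne_two_pow {a b c : ℕ} (h : a < b) :
    2 ^ a + 2 ^ b ≠ 2 ^ c := by
  intro hc
  have := congrArg Nat.bitIndices hc
  rw [Nat.bitIndices_two_pow_add_two_pow h, Nat.bitIndices_two_pow] at this
  simp at this

theorem Nat.two_pow_add_two_pow_eq_two_pow_iff {a b c : ℕ} :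
    2 ^ a + 2 ^ b = 2 ^ c ↔ a = b ∧ c = a + 1 := by
  constructor
  · intro h
    rcases lt_trichotomy a b with hab | rfl | hab
    · exact absurd h (Nat.two_pow_add_two_pow_ne_two_pow hab)
    · rw [← two_mul, ← pow_succ'] at h
      exact ⟨rfl, (Nat.pow_right_injective le_rfl h).symm⟩
    · rw [add_comm] at h
      exact absurd h (Nat.two_pow_add_two_pow_ne_two_pow hab)
  · rintro ⟨rfl, rfl⟩
    ring

theorem Nat.two_pow_add_two_pow_inj {a b c d : ℕ} (hab : a < b)
    (h : 2 ^ c + 2 ^ d = 2 ^ a + 2 ^ b) : c = a ∧ d = b ∨ c = b ∧ d = a := by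
  rcases lt_trichotomy c d with hcd | rfl | hcd
  · have := congrArg Nat.bitIndices h
    rw [Nat.bitIndices_two_pow_add_two_pow hcd, Nat.bitIndices_two_pow_add_two_pow hab] at this
    simp_all
  · rw [← two_mul, ← pow_succ'] at h
    exact absurd h.symm (Nat.two_pow_add_two_pow_ne_two_pow hab)
  · have := congrArg Nat.bitIndices h
    rw [add_comm, Nat.bitIndices_two_pow_add_two_pow hcd,
      Nat.bitIndices_two_pow_add_two_pow hab] at this
    simp_all

theorem two_pow_le_and_zeroOrTwoPow_sub_iff {n j : ℕ} :
    2 ^ j ≤ n ∧ ZeroOrTwoPow (n - 2 ^ j) ↔ n = 2 ^ j ∨ ∃ e, n = 2 ^ j + 2 ^ e := by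
  constructor
  · rintro ⟨hle, h⟩
    by_cases h0 : n - 2 ^ j = 0
    · left; omega
    · obtain ⟨e, he⟩ := h h0
      exact Or.inr ⟨e, by omega⟩
  · rintro (rfl | ⟨e, rfl⟩)
    · exact ⟨le_rfl, fun h => absurd (Nat.sub_self _) h⟩
    · exact ⟨Nat.le_add_right _ _, fun _ => ⟨e, Nat.add_sub_cancel_left _ _⟩⟩

open Classical in
theorem even_card_filter_zeroOrTwoPow_sub_two_pow {n K : ℕ} (hn : n ≠ 1) (hnK : n ≤ 2 ^ K) :
    Even #{j ∈ range (K + 1) | 2 ^ j ≤ n ∧ ZeroOrTwoPow (n - 2 ^ j)} := by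
  simp_rw [two_pow_le_and_zeroOrTwoPow_sub_iff]
  have hlt {j : ℕ} (hj : 2 ^ j ≤ n) : j < K + 1 :=
    Nat.lt_succ_of_le ((Nat.pow_le_pow_iff_right one_lt_two).mp (hj.trans hnK))
  by_cases hpow : ∃ a, n = 2 ^ a
  · obtain ⟨a, rfl⟩ := hpow
    have ha : a ≠ 0 := by rintro rfl; exact hn rfl
    have : {j ∈ range (K + 1) | 2 ^ a = 2 ^ j ∨ ∃ e, 2 ^ a = 2 ^ j + 2 ^ e} = {a - 1, a} := by
      ext j
      simp only [mem_filter, mem_range, mem_insert, mem_singleton, eq_comm (a := 2 ^ a),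
        Nat.two_pow_add_two_pow_eq_two_pow_iff, Nat.pow_right_inj one_lt_two]
      constructor
      · rintro ⟨-, h | ⟨e, -, rfl⟩⟩ <;> omega
      · intro h
        refine ⟨hlt (Nat.pow_le_pow_right two_pos (by omega)), ?_⟩
        rcases h with rfl | rfl
        · exact Or.inr ⟨a - 1, rfl, by omega⟩
        · exact Or.inl rfl
    rw [this, card_pair (by omega)]
    exact even_two
  by_cases htwo : ∃ a b, a < b ∧ n = 2 ^ a + 2 ^ b
  · obtain ⟨a, b, hab, rfl⟩ := htwo
    have : {j ∈ range (K + 1) | 2 ^ a + 2 ^ b = 2 ^ j ∨ ∃ e, 2 ^ a + 2 ^ b = 2 ^ j + 2 ^ e}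
        = {a, b} := by
      ext j
      simp only [mem_filter, mem_range, mem_insert, mem_singleton]
      constructor
      · rintro ⟨-, h | ⟨e, he⟩⟩
        · exact absurd h (Nat.two_pow_add_two_pow_ne_two_pow hab)
        · rcases Nat.two_pow_add_two_pow_inj hab he.symm with ⟨h, -⟩ | ⟨h, -⟩ <;> simp [h]
      · rintro (rfl | rfl)
        · exact ⟨hlt (Nat.le_add_right _ _), Or.inr ⟨b, rfl⟩⟩
        · exact ⟨hlt (Nat.le_add_left _ _), Or.inr ⟨a, add_comm _ _⟩⟩
    rw [this, card_pair hab.ne]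
    exact even_two
  rw [filter_false_of_mem]
  · exact ⟨0, rfl⟩
  rintro j - (h | ⟨e, he⟩)
  · exact hpow ⟨j, h⟩
  rcases lt_trichotomy j e with hje | rfl | hje
  · exact htwo ⟨j, e, hje, he⟩
  · exact hpow ⟨j + 1, by rw [he, pow_succ]; ring⟩
  · exact htwo ⟨e, j, hje, by rw [he, add_comm]⟩

open Classical in
theorem coeff_G (k m : ℕ) (ν : Fin k →₀ ℕ) :
    coeff ν (G k m) = if ∑ i, ν i = m ∧ ∀ i, ZeroOrTwoPow (ν i) then 1 else 0 := by
  unfold G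
  simp only [coeff_sum, apply_ite (coeff ν), coeff_prod_X_pow, coeff_zero, ← ite_and]
  by_cases hb : ∀ i, ν i < m + 1
  · let d₀ : Fin k → Fin (m + 1) := fun i => ⟨ν i, hb i⟩
    have hd₀ (d : Fin k → Fin (m + 1)) :
        ν = Finsupp.indicator univ (fun i _ => (d i : ℕ)) ↔ d₀ = d := by
      simp [Finsupp.ext_iff, funext_iff, Fin.ext_iff, d₀]
    simp_rw [hd₀, and_comm (b := d₀ = _), ite_and, sum_ite_eq, if_pos (mem_univ _)]
    exact if_congr Iff.rfl (if_congr Iff.rfl rfl rfl) rfl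
  · obtain ⟨i, hi⟩ := not_forall.mp hb
    rw [if_neg, sum_eq_zero]
    · intro d _
      rw [if_neg]
      rintro ⟨-, rfl⟩
      simp only [Finsupp.indicator_apply, mem_univ, ↓reduceDIte] at hi
      omega
    · rintro ⟨hsum, -⟩
      have := single_le_sum (fun l _ => Nat.zero_le (ν l)) (mem_univ i)
      omega

theorem G_zero (k : ℕ) : G k 0 = 1 := by
  classical
  ext ν
  rw [coeff_G, coeff_one]
  simp only [Finsupp.ext_iff, Finsupp.coe_zero, Pi.zero_apply, eq_comm (b := ν _)]
  exact if_congr ⟨fun h => (sum_eq_zero_iff.mp h.1 · (mem_univ _)),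
    fun h => ⟨sum_eq_zero fun i _ => h i, fun i hi => absurd (h i) hi⟩⟩ rfl rfl

open Classical in
theorem coeff_G_mul_X_pow {k : ℕ} (m a : ℕ) (i : Fin k) (μ : Fin k →₀ ℕ) :
    coeff μ (G k m * X i ^ a) =
      if a ≤ μ i ∧ ∑ l, μ l = m + a ∧ ZeroOrTwoPow (μ i - a) ∧ ∀ l ≠ i, ZeroOrTwoPow (μ l)
      then 1 else 0 := by
  rw [X_pow_eq_monomial, coeff_mul_monomial', mul_one]
  by_cases ha : a ≤ μ i
  · have hsub : ⇑(μ - Finsupp.single i a) = Function.update μ i (μ i - a) := by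
      ext l
      rcases eq_or_ne l i with rfl | hl <;> simp [*]
    have hsum : ∑ l, μ l = ∑ l, (μ - Finsupp.single i a) l + a := by
      rw [hsub, ← add_sum_erase _ _ (mem_univ i), ← add_sum_erase _ _ (mem_univ i),
        Function.update_self,
        sum_congr rfl fun l hl => Function.update_of_ne (ne_of_mem_erase hl) _ _]
      omega
    rw [if_pos (Finsupp.single_le_iff.mpr ha), coeff_G, hsum, hsub]
    refine if_congr ?_ rfl rfl
    rw [Function.forall_update_iff (p := fun _ n => ZeroOrTwoPow n)]
    simp [ha]
  · rw [if_neg (mt Finsupp.single_le_iff.mp ha), if_neg (fun h => ha h.1)]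

open Classical in
theorem sum_G_mul_X_pow_two_pow_eq_zero {k : ℕ} (i : Fin k) :
    ∑ j ∈ range (k + 1), G k (2 ^ k - 2 ^ j) * X i ^ 2 ^ j = 0 := by
  ext μ
  rw [coeff_sum, coeff_zero]
  have hterm : ∀ j ∈ range (k + 1), coeff μ (G k (2 ^ k - 2 ^ j) * X i ^ 2 ^ j) =
      if (∑ l, μ l = 2 ^ k ∧ ∀ l ≠ i, ZeroOrTwoPow (μ l)) ∧
        (2 ^ j ≤ μ i ∧ ZeroOrTwoPow (μ i - 2 ^ j)) then 1 else 0 := fun j hj => by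
    rw [coeff_G_mul_X_pow, Nat.sub_add_cancel
      (Nat.pow_le_pow_right two_pos (Nat.lt_succ_iff.mp (mem_range.mp hj)))]
    exact if_congr (by tauto) rfl rfl
  rw [sum_congr rfl hterm]
  by_cases hμ : ∑ l, μ l = 2 ^ k ∧ ∀ l ≠ i, ZeroOrTwoPow (μ l)
  · rw [sum_congr rfl fun j _ => if_congr (and_iff_right hμ) rfl rfl, sum_boole,
      ZMod.natCast_eq_zero_iff_even]
    have hsplit := add_sum_erase univ μ (mem_univ i)
    refine even_card_filter_zeroOrTwoPow_sub_two_pow (n := μ i) (K := k) (fun h1 => ?_)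
      (by omega)
    refine sum_ne_two_pow_sub_one_of_card_lt (s := univ.erase i) (k := k)
      (fun l hl => hμ.2 l (ne_of_mem_erase hl)) ?_ (by omega)
    rw [card_erase_of_mem (mem_univ i), Finset.card_univ, Fintype.card_fin]
    exact Nat.sub_lt i.pos one_pos
  · simp [hμ]

theorem X_pow_two_pow_eq_sum_G_mul {k : ℕ} (i : Fin k) :
    (X i : MvPolynomial (Fin k) (ZMod 2)) ^ 2 ^ k =
      ∑ c : Fin k, G k (2 ^ k - 2 ^ (c : ℕ)) * X i ^ 2 ^ (c : ℕ) := by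
  have := sum_G_mul_X_pow_two_pow_eq_zero i
  rw [sum_range_succ, Nat.sub_self, G_zero, one_mul, CharTwo.add_eq_zero] at this
  rw [← this]
  exact (Fin.sum_univ_eq_sum_range (fun c => G k (2 ^ k - 2 ^ c) * X i ^ 2 ^ c) k).symm

theorem Matrix.det_submatrix_id_perm_of_charTwo {n R : Type*} [DecidableEq n] [Fintype n]
    [CommRing R] [CharP R 2] (σ : Equiv.Perm n) (M : Matrix n n R) :
    (M.submatrix id σ).det = M.det := by
  rw [Matrix.det_permute']
  rcases Int.units_eq_one_or (Equiv.Perm.sign σ) with h | h <;> simp [h, CharTwo.neg_eq]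

theorem Vdm_comp_perm {k : ℕ} (t : Fin k → ℕ) (σ : Equiv.Perm (Fin k)) :
    Vdm k (t ∘ σ) = Vdm k t :=
  Matrix.det_submatrix_id_perm_of_charTwo σ (.of fun i c => X i ^ t c)

theorem Vdm_update {k : ℕ} (t : Fin k → ℕ) (p : Fin k) (ℓ : ℕ)
    (a : Fin k → MvPolynomial (Fin k) (ZMod 2))
    (h : ∀ i, (X i : MvPolynomial (Fin k) (ZMod 2)) ^ ℓ = ∑ c, a c * X i ^ t c) :
    Vdm k (Function.update t p ℓ) = a p * Vdm k t := by
  let M : Matrix (Fin k) (Fin k) (MvPolynomial (Fin k) (ZMod 2)) := .of fun i c => X i ^ t c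
  have hcol : Matrix.of (fun i c => (X i : MvPolynomial (Fin k) (ZMod 2)) ^
      Function.update t p ℓ c) = M.updateCol p fun i => ∑ c, a c • M i c := by
    ext i c
    rcases eq_or_ne c p with rfl | hc
    · simp [M, h]
    · simp [M, hc]
  rw [Vdm, hcol, Matrix.det_updateCol_sum, smul_eq_mul, Vdm]

theorem Vdm_snoc_comp_succAbove {n : ℕ} (t : Fin (n + 1) → ℕ) (J : Fin (n + 1)) (ℓ : ℕ)
    (a : Fin (n + 1) → MvPolynomial (Fin (n + 1)) (ZMod 2))
    (h : ∀ i, (X i : MvPolynomial (Fin (n + 1)) (ZMod 2)) ^ ℓ = ∑ c, a c * X i ^ t c) :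
    Vdm (n + 1) (Fin.snoc (t ∘ J.succAbove) ℓ) = a J * Vdm (n + 1) t := by
  let τ : Equiv.Perm (Fin (n + 1)) := finSuccEquivLast.trans (finSuccEquiv' J).symm
  have hτ : Fin.snoc (t ∘ J.succAbove) ℓ = Function.update (t ∘ τ) (Fin.last n) ℓ := by
    ext c
    induction c using Fin.lastCases with
    | last => simp
    | cast c => simp [τ, Fin.castSucc_ne_last]
  have hsum (i : Fin (n + 1)) : (X i : MvPolynomial (Fin (n + 1)) (ZMod 2)) ^ ℓ =
      ∑ c, (a ∘ τ) c * X i ^ (t ∘ τ) c := by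
    rw [h i]
    exact (Equiv.sum_comp τ fun c => a c * X i ^ t c).symm
  rw [hτ, Vdm_update _ _ _ _ hsum, Vdm_comp_perm]
  simp [τ]

theorem N_eq_Vdm_snoc (n ℓ : ℕ) (J : Fin (n + 1)) :
    N (n + 1) ℓ J =
      Vdm (n + 1) (Fin.snoc ((fun c : Fin (n + 1) => 2 ^ (c : ℕ)) ∘ J.succAbove) (2 ^ ℓ)) := by
  unfold N
  congr 1
  ext c
  induction c using Fin.lastCases with
  | last => simp
  | cast c =>
    simp only [Fin.snoc_castSucc, Function.comp_apply, Fin.succAbove, Fin.lt_def]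
    split_ifs <;> simp_all

theorem stmt8 (k j : ℕ) (hk : 1 ≤ k) (hj : j ≤ k - 1) :
    D k * G k (2 ^ k - 2 ^ j) = N k k j := by
  obtain ⟨n, rfl⟩ := Nat.exists_eq_add_of_le' hk
  let J : Fin (n + 1) := ⟨j, by omega⟩
  rw [show j = J from rfl, N_eq_Vdm_snoc,
    Vdm_snoc_comp_succAbove _ J _ _ X_pow_two_pow_eq_sum_G_mul, mul_comm, D]
end

section
/- Let ℓ ≥ k ≥ 1. Then D·(∑_f ∏_{i=0}^{ℓ−1} x_{f(i)}^{2^i}) = N(ℓ,0) in F₂[x_1,…,x_k], where the sum ranges over all surjective functions f : {0,1,…,ℓ−1} → {1,…,k}. (This is the formula for the v_0-action polynomial p_{ℓ,0} of Theorem 4.) -/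
open MvPolynomial

/-!
Expanding the determinant along a first row `(y ^ 2 ^ e t)_t`, with exponents
`e = (0, 1, …, k - 1, ℓ)`, gives a 2-linearised polynomial `L y = ∑ t, c t * y ^ 2 ^ e t` whose
coefficients are the complementary minors (`c 0 = N(ℓ,0)`, `c k = D`). A repeated row shows that
`L` vanishes at every `xᵢ`, hence, by additivity in characteristic 2, at every subset sum
`x_S = ∑ i ∈ S, xᵢ`. Since `x_S ≠ 0` for `S ≠ ∅`, also `u y = ∑ t, c t * y ^ (2 ^ e t - 1)`
vanishes there, so `∑ S, u x_S = u 0 = N(ℓ,0)`. On the other hand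
`x_S ^ (2 ^ m - 1) = ∏ t < m, x_S ^ 2 ^ t` expands into a sum over maps `g : Fin m → S`, and summing
over all `S` counts each `g` once per `S ⊇ range g`, i.e. `2 ^ (k - #range g)` times: modulo 2 only
the surjections survive, and for `m < k` there are none. Hence `∑ S, u x_S` is also `D` times the
surjection sum for `m = ℓ`.
-/

open Finset

section SurjPowSum

variable {R β : Type*} [CommSemiring R] [Fintype β] [DecidableEq β]

noncomputable def surjPowSum (a : β → R) (m : ℕ) : R :=
  ∑ g ∈ univ.filter fun g : Fin m → β => Function.Surjective g, ∏ t, a (g t) ^ 2 ^ (t : ℕ)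

theorem surjPowSum_eq_zero_of_lt (a : β → R) {m : ℕ} (hm : m < Fintype.card β) :
    surjPowSum a m = 0 := by
  refine sum_eq_zero fun g hg => absurd (Fintype.card_le_of_surjective g (mem_filter.mp hg).2) ?_
  simpa using hm

end SurjPowSum

theorem Nat.two_pow_sub_one_eq_sum_fin (m : ℕ) : 2 ^ m - 1 = ∑ t : Fin m, 2 ^ (t : ℕ) := by
  rw [Fin.sum_univ_eq_sum_range (2 ^ ·), Nat.geomSum_eq le_rfl]
  simp

section CharTwo

variable {R β : Type*} [CommSemiring R] [CharP R 2]

theorem sum_pow_two_pow_sub_one (S : Finset β) (a : β → R) (m : ℕ) :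
    (∑ i ∈ S, a i) ^ (2 ^ m - 1) =
      ∑ g ∈ Fintype.piFinset fun _ : Fin m => S, ∏ t, a (g t) ^ 2 ^ (t : ℕ) := by
  rw [Nat.two_pow_sub_one_eq_sum_fin, ← prod_pow_eq_pow_sum]
  simp_rw [sum_pow_char_pow]
  exact prod_univ_sum _ _

theorem sum_finset_sum_piFinset_eq_sum_surjective {α : Type*} [Fintype α] [DecidableEq α]
    [Fintype β] [DecidableEq β] (w : (α → β) → R) :
    ∑ S : Finset β, ∑ g ∈ Fintype.piFinset fun _ : α => S, w g =
      ∑ g ∈ univ.filter Function.Surjective, w g := by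
  rw [sum_comm' (t' := univ) (s' := fun g => Icc (univ.image g) univ) (by
    simp [image_subset_iff]), sum_filter]
  refine sum_congr rfl fun g _ => ?_
  rw [sum_const, card_Icc_finset (subset_univ _), card_univ]
  split_ifs with hg
  · simp [image_univ_of_surjective hg]
  · have : (univ.image g).card < Fintype.card β := by
      rw [card_lt_iff_ne_univ]
      intro h
      exact hg fun b => by simpa using (h ▸ mem_univ b : b ∈ univ.image g)
    rw [nsmul_eq_mul, Nat.cast_pow, Nat.cast_ofNat, CharTwo.two_eq_zero, zero_pow (by omega),
      zero_mul]

variable [Fintype β] [DecidableEq β]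

theorem sum_finset_sum_pow_two_pow_sub_one (a : β → R) (m : ℕ) :
    ∑ S : Finset β, (∑ i ∈ S, a i) ^ (2 ^ m - 1) = surjPowSum a m := by
  simp_rw [sum_pow_two_pow_sub_one]
  exact sum_finset_sum_piFinset_eq_sum_surjective _

theorem sum_mul_surjPowSum_eq_of_roots [NoZeroDivisors R] {ι : Type*} [Fintype ι] (a : β → R)
    (ha : ∀ S : Finset β, S.Nonempty → ∑ i ∈ S, a i ≠ 0) (c : ι → R) (e : ι → ℕ)
    (hroot : ∀ i, ∑ t, c t * a i ^ 2 ^ e t = 0) :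
    ∑ t, c t * surjPowSum a (e t) = ∑ t, if e t = 0 then c t else 0 := by
  let u : R → R := fun y => ∑ t, c t * y ^ (2 ^ e t - 1)
  have hu : ∀ S : Finset β, S.Nonempty → u (∑ i ∈ S, a i) = 0 := by
    intro S hS
    refine (mul_eq_zero.mp ?_).resolve_left (ha S hS)
    calc (∑ i ∈ S, a i) * u (∑ i ∈ S, a i)
        = ∑ t, c t * (∑ i ∈ S, a i) ^ 2 ^ e t := by
          simp only [u, mul_sum]
          refine sum_congr rfl fun t _ => ?_
          rw [mul_left_comm, ← pow_succ', Nat.sub_add_cancel Nat.one_le_two_pow]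
      _ = ∑ i ∈ S, ∑ t, c t * a i ^ 2 ^ e t := by
          simp_rw [sum_pow_char_pow, mul_sum]
          exact sum_comm
      _ = 0 := sum_eq_zero fun i _ => hroot i
  calc ∑ t, c t * surjPowSum a (e t)
      = ∑ S : Finset β, u (∑ i ∈ S, a i) := by
        simp only [u, ← sum_finset_sum_pow_two_pow_sub_one, mul_sum]
        exact sum_comm
    _ = u 0 := by
        rw [sum_eq_single_of_mem ∅ (mem_univ _) fun S _ hS => hu S (nonempty_iff_ne_empty.mpr hS),
          sum_empty]
    _ = ∑ t, if e t = 0 then c t else 0 := by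
        refine sum_congr rfl fun t _ => ?_
        split_ifs with ht
        · simp [ht]
        · rw [zero_pow (by have := Nat.le_self_pow ht 2; omega), mul_zero]

end CharTwo

theorem MvPolynomial.sum_X_ne_zero {σ R : Type*} [CommSemiring R] [Nontrivial R] {S : Finset σ}
    (hS : S.Nonempty) : ∑ i ∈ S, (X i : MvPolynomial σ R) ≠ 0 := by
  classical
  obtain ⟨i₀, hi₀⟩ := hS
  intro h
  have := congrArg (eval fun i => if i = i₀ then (1 : R) else 0) h
  simp [hi₀] at this

theorem sum_Vdm_succAbove_mul_X_pow {k : ℕ} (E : Fin (k + 1) → ℕ) (i : Fin k) :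
    ∑ t : Fin (k + 1), Vdm k (fun b => E (t.succAbove b)) * X i ^ E t = 0 := by
  let M : Matrix (Fin (k + 1)) (Fin (k + 1)) (MvPolynomial (Fin k) (ZMod 2)) :=
    Matrix.of fun r t => Matrix.vecCons (X i) X r ^ E t
  have hM : M.det = 0 := Matrix.det_zero_of_row_eq (Fin.succ_ne_zero i).symm (by ext t; simp [M])
  rw [Matrix.det_succ_row_zero] at hM
  rw [← hM]
  refine sum_congr rfl fun t _ => ?_
  simp [M, Vdm, Matrix.submatrix, CharTwo.neg_eq, mul_comm]

theorem stmt10 (k ℓ : ℕ) (hk : 1 ≤ k) (hℓ : k ≤ ℓ) :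
    D k * ∑ f ∈ Finset.univ.filter (fun f : Fin ℓ → Fin k => Function.Surjective f),
        ∏ i : Fin ℓ, (X (f i) : MvPolynomial (Fin k) (ZMod 2)) ^ (2 ^ (i : ℕ)) =
      N k ℓ 0 := by
  let e : Fin (k + 1) → ℕ := fun t => if (t : ℕ) < k then t else ℓ
  have key := sum_mul_surjPowSum_eq_of_roots X (fun _ => sum_X_ne_zero)
    (fun t => Vdm k fun b => 2 ^ e (t.succAbove b)) e (sum_Vdm_succAbove_mul_X_pow fun t => 2 ^ e t)
  have hD : Vdm k (fun b => 2 ^ e ((Fin.last k).succAbove b)) = D k := by simp [D, e]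
  have hN : Vdm k (fun b => 2 ^ e ((0 : Fin (k + 1)).succAbove b)) = N k ℓ 0 := by simp [N, e]
  have he_castSucc (j : Fin k) : e j.castSucc = j := by simp [e]
  have he_last : e (Fin.last k) = ℓ := by simp [e]
  have he_ne_zero (t : Fin (k + 1)) (ht : t ≠ 0) : e t ≠ 0 := by
    simp only [e]
    split_ifs
    · exact fun h => ht (Fin.ext h)
    · omega
  rw [Fin.sum_univ_castSucc, sum_eq_zero fun j _ => ?_, zero_add, hD, he_last,
    Fintype.sum_eq_single 0 fun t ht => if_neg (he_ne_zero t ht),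
    if_pos (by simp [e, show 0 < k from hk]), hN] at key
  · exact key
  · rw [he_castSucc, surjPowSum_eq_zero_of_lt X (by simp), mul_zero]
end

section
/- Let k ≥ 1, let t_1,…,t_k be natural numbers, and let A be an invertible k×k matrix over F₂. Then A·V(2^{t_1},…,2^{t_k}) = V(2^{t_1},…,2^{t_k}); that is, every Vandermonde determinant in x_1,…,x_k with 2-power exponents is invariant under the action of GL_k(F₂) by linear substitution of the variables. -/
open MvPolynomial

theorem stmt12 (k : ℕ) (hk : 1 ≤ k) (t : Fin k → ℕ)
    (A : Matrix (Fin k) (Fin k) (ZMod 2)) (hA : IsUnit A.det) :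
    aeval (fun i => ∑ j, C (A i j) * X j) (Vdm k (fun i => 2 ^ t i)) =
      Vdm k (fun i => 2 ^ t i) := by
  classical
  have h0 : A.det ≠ 0 := hA.ne_zero
  have hdet1 : A.det = 1 := by
    revert h0; generalize A.det = a; revert a; decide
  set f : MvPolynomial (Fin k) (ZMod 2) →ₐ[ZMod 2] MvPolynomial (Fin k) (ZMod 2) :=
    aeval (fun i => ∑ j, C (A i j) * X j) with hf
  set M : Matrix (Fin k) (Fin k) (MvPolynomial (Fin k) (ZMod 2)) :=
    Matrix.of fun i j : Fin k => (X i : MvPolynomial (Fin k) (ZMod 2)) ^ 2 ^ t j with hM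
  have key : M.map f = A.map C * M := by
    refine Matrix.ext fun i j => ?_
    simp only [hM, hf, Matrix.map_apply, Matrix.of_apply, Matrix.mul_apply]
    rw [map_pow, aeval_X, sum_pow_char_pow]
    refine Finset.sum_congr rfl fun l _ => ?_
    rw [mul_pow, ← map_pow, ZMod.pow_card_pow]
  have hVdm : Vdm k (fun i => 2 ^ t i) = M.det := rfl
  have hC : (A.map (C : ZMod 2 →+* MvPolynomial (Fin k) (ZMod 2))).det = C A.det := by
    rw [← RingHom.mapMatrix_apply, ← RingHom.map_det]
  rw [hVdm, AlgHom.map_det f M, AlgHom.mapMatrix_apply, key, Matrix.det_mul, hC, hdet1,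
    map_one, one_mul]
end

section
/- Let k ≥ 1 and 0 ≤ j ≤ k−1, and let A be an invertible k×k matrix over F₂. Then A·G_{2^k−2^j} = G_{2^k−2^j}; that is, the sum of all monomials of degree 2^k−2^j in x_1,…,x_k whose nonzero exponents are powers of 2 is invariant under the action of GL_k(F₂) by linear substitution (it is the Dickson invariant c_{k,j} over F₂). -/
open MvPolynomial

/-!
Over `F₂` the truncated series `L(x) = ∑_{e<N} x^{2^e} t^{2^e}` is additive in `x` and satisfies
`L + L² = x t + x^{2^N} t^{2^N}`, and for `m < 2^N` the polynomial `G_m` is the coefficient of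
`t^m` in `Γ = ∏ᵢ (1 + L(xᵢ))`. The group `GL_k(F₂)` is generated by the transvections
`x_u ↦ x_u + x_v`, and such a transvection adds `(x_v t + x_v^{2^N} t^{2^N}) ∏_{i ≠ u, v} (1 + L(xᵢ))`
to `Γ`. For `m = 2^k - 2^j` and `N = k`, the `t^m`-coefficient of this correction is `x_v` times a
sum of monomials whose `k - 2` exponents are zero or powers of two adding up to `2^k - 2^j - 1`.
There are none: that number has `k - 1` binary digits equal to one, and the binary digit sum is
subadditive.
-/

namespace Nat

theorem digits_sum_add_le_s13 (p : ℕ) [Fact p.Prime] (a b : ℕ) :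
    (p.digits (a + b)).sum ≤ (p.digits a).sum + (p.digits b).sum := by
  -- Legendre: `(p - 1) v_p(n!) = n - s_p(n)`; and `a! b! ∣ (a + b)!`.
  have hfac : padicValNat p (a ! * b !) ≤ padicValNat p (a + b)! :=
    (padicValNat_dvd_iff_le (factorial_ne_zero _)).mp
      ((pow_padicValNat_dvd).trans (factorial_mul_factorial_dvd_factorial_add a b))
  rw [padicValNat.mul (factorial_ne_zero _) (factorial_ne_zero _)] at hfac
  have ha := sub_one_mul_padicValNat_factorial (p := p) a
  have hb := sub_one_mul_padicValNat_factorial (p := p) b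
  have hab := sub_one_mul_padicValNat_factorial (p := p) (a + b)
  have hmul := Nat.mul_le_mul_left (p - 1) hfac
  rw [Nat.mul_add] at hmul
  have := digit_sum_le p a
  have := digit_sum_le p b
  have := digit_sum_le p (a + b)
  omega

theorem digits_sum_pow {b : ℕ} (hb : 1 < b) (e : ℕ) : (b.digits (b ^ e)).sum = 1 := by
  have h := digits_base_pow_mul (k := e) (m := 1) hb one_pos
  rw [mul_one] at h
  simp [h, digits_of_lt b 1 one_ne_zero hb]

theorem digits_sum_pow_sub_one {b : ℕ} (hb : 1 < b) (k : ℕ) :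
    (b.digits (b ^ k - 1)).sum = k * (b - 1) := by
  induction k with
  | zero => simp
  | succ k ih =>
    have hpos : 1 ≤ b ^ k := one_le_pow _ _ (by omega)
    have hsplit : b ^ (k + 1) - 1 = (b - 1) + b * (b ^ k - 1) := by
      rw [pow_succ', Nat.mul_sub, mul_one]
      have : b ≤ b * b ^ k := Nat.le_mul_of_pos_right b hpos
      omega
    rw [hsplit, digits_add b hb _ _ (by omega) (by omega), List.sum_cons, ih]
    ring

theorem digits_sum_pow_sub_pow_sub_one (p : ℕ) [hp : Fact p.Prime] {j k : ℕ} (hjk : j < k) :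
    k * (p - 1) ≤ (p.digits (p ^ k - p ^ j - 1)).sum + 1 := by
  have hlt : p ^ j < p ^ k := Nat.pow_lt_pow_right hp.out.one_lt hjk
  have hsplit : p ^ k - 1 = (p ^ k - p ^ j - 1) + p ^ j := by omega
  have := digits_sum_add_le_s13 p (p ^ k - p ^ j - 1) (p ^ j)
  rwa [← hsplit, digits_sum_pow_sub_one hp.out.one_lt, digits_sum_pow hp.out.one_lt] at this

end Nat

instance PowerSeries.charP {R : Type*} [CommSemiring R] (p : ℕ) [CharP R p] :
    CharP (PowerSeries R) p :=
  charP_of_injective_ringHom PowerSeries.C_injective p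

section TwoPowSeries

open Finset

variable {R : Type*} [CommRing R]

noncomputable def twoPowSeries (N : ℕ) (x : R) : PowerSeries R :=
  ∑ e ∈ range N, PowerSeries.monomial (2 ^ e) (x ^ 2 ^ e)

theorem coeff_twoPowSeries (N n : ℕ) (x : R) :
    PowerSeries.coeff n (twoPowSeries N x) = if ∃ e < N, n = 2 ^ e then x ^ n else 0 := by
  have hinj : Function.Injective (2 ^ · : ℕ → ℕ) := Nat.pow_right_injective le_rfl
  rw [twoPowSeries, map_sum]
  simp_rw [PowerSeries.coeff_monomial]
  split_ifs with h
  · obtain ⟨e, he, rfl⟩ := h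
    rw [sum_eq_single e (fun e' _ he' => if_neg fun h => he' (hinj h.symm))
      (fun h => absurd (mem_range.mpr he) h), if_pos rfl]
  · exact sum_eq_zero fun e he => if_neg fun hn => h ⟨e, mem_range.mp he, hn⟩

theorem map_twoPowSeries {S : Type*} [CommRing S] (φ : R →+* S) (N : ℕ) (x : R) :
    PowerSeries.map φ (twoPowSeries N x) = twoPowSeries N (φ x) := by
  simp only [twoPowSeries, map_sum]
  refine sum_congr rfl fun e _ => PowerSeries.ext fun n => ?_
  simp only [PowerSeries.coeff_map, PowerSeries.coeff_monomial]
  split_ifs <;> simp [map_pow]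

variable [CharP R 2]

theorem twoPowSeries_add (N : ℕ) (x y : R) :
    twoPowSeries N (x + y) = twoPowSeries N x + twoPowSeries N y := by
  simp only [twoPowSeries, add_pow_char_pow, map_add, sum_add_distrib]

theorem twoPowSeries_add_sq (N : ℕ) (x : R) :
    twoPowSeries N x + twoPowSeries N x ^ 2 =
      PowerSeries.monomial 1 x + PowerSeries.monomial (2 ^ N) (x ^ 2 ^ N) := by
  have hsq : twoPowSeries N x ^ 2 =
      ∑ e ∈ range N, PowerSeries.monomial (2 ^ (e + 1)) (x ^ 2 ^ (e + 1)) := by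
    rw [twoPowSeries, sum_pow_char]
    refine sum_congr rfl fun e _ => ?_
    rw [PowerSeries.monomial_pow, ← pow_mul, pow_succ, mul_comm]
  have hshift := (sum_range_succ' (fun e => PowerSeries.monomial (2 ^ e) (x ^ 2 ^ e)) N).symm.trans
    (sum_range_succ (fun e => PowerSeries.monomial (2 ^ e) (x ^ 2 ^ e)) N)
  rw [pow_zero, pow_one, ← twoPowSeries] at hshift
  rw [hsq]
  linear_combination hshift + (twoPowSeries N x - PowerSeries.monomial 1 x) *
    (CharTwo.two_eq_zero : (2 : PowerSeries R) = 0)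

end TwoPowSeries

section OneAddTwoPowSeries

open Finset

variable {R : Type*} [CommRing R] {ι : Type*} [DecidableEq ι]

theorem coeff_prod_one_add_twoPowSeries (N n : ℕ) (s : Finset ι) (x : ι → R) :
    PowerSeries.coeff n (∏ i ∈ s, (1 + twoPowSeries N (x i))) =
      ∑ d ∈ s.finsuppAntidiag n,
        if ∀ i ∈ s, d i = 0 ∨ ∃ e < N, d i = 2 ^ e then ∏ i ∈ s, x i ^ d i else 0 := by
  rw [PowerSeries.coeff_prod]
  refine sum_congr rfl fun d _ => ?_
  rw [← prod_ite_zero]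
  refine prod_congr rfl fun i _ => ?_
  rw [map_add, PowerSeries.coeff_one, coeff_twoPowSeries]
  by_cases h0 : d i = 0
  · simp [h0, eq_comm (a := 0)]
  · simp [h0]

theorem coeff_prod_one_add_twoPowSeries_eq_zero {N n : ℕ} {s : Finset ι} (x : ι → R)
    (h : #s < (Nat.digits 2 n).sum) :
    PowerSeries.coeff n (∏ i ∈ s, (1 + twoPowSeries N (x i))) = 0 := by
  rw [coeff_prod_one_add_twoPowSeries]
  refine sum_eq_zero fun d hd => if_neg fun hpow => h.not_ge ?_
  calc (Nat.digits 2 n).sum = (Nat.digits 2 (∑ i ∈ s, d i)).sum := by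
        rw [(mem_finsuppAntidiag.mp hd).1]
    _ ≤ ∑ i ∈ s, (Nat.digits 2 (d i)).sum :=
        le_sum_of_subadditive (fun n => (Nat.digits 2 n).sum) (by simp) (Nat.digits_sum_add_le_s13 2) _ _
    _ ≤ ∑ _i ∈ s, 1 := sum_le_sum fun i hi => by
        rcases hpow i hi with h0 | ⟨e, -, he⟩
        · simp [h0]
        · rw [he, Nat.digits_sum_pow one_lt_two]
    _ = #s := by simp

variable [CharP R 2]

theorem prod_one_add_twoPowSeries_update (N : ℕ) {s : Finset ι} {u v : ι} (hu : u ∈ s)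
    (hv : v ∈ s) (huv : u ≠ v) (x : ι → R) :
    ∏ i ∈ s, (1 + twoPowSeries N (Function.update x u (x u + x v) i)) =
      ∏ i ∈ s, (1 + twoPowSeries N (x i)) +
        (PowerSeries.monomial 1 (x v) + PowerSeries.monomial (2 ^ N) (x v ^ 2 ^ N)) *
          ∏ i ∈ (s.erase u).erase v, (1 + twoPowSeries N (x i)) := by
  have hv' : v ∈ s.erase u := mem_erase.mpr ⟨huv.symm, hv⟩
  rw [← mul_prod_erase s _ hu, ← mul_prod_erase _ _ hv', ← mul_prod_erase s _ hu,
    ← mul_prod_erase _ _ hv', Function.update_self, Function.update_of_ne huv.symm,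
    prod_congr rfl fun i hi => by
      rw [Function.update_of_ne (mem_erase.mp (mem_erase.mp hi).2).1], twoPowSeries_add]
  linear_combination (∏ i ∈ (s.erase u).erase v, (1 + twoPowSeries N (x i))) *
    twoPowSeries_add_sq N (x v)

end OneAddTwoPowSeries

open Finset in
theorem G_eq_coeff_prod {k m N : ℕ} (hm : m < 2 ^ N) :
    G k m = PowerSeries.coeff m
      (∏ i, (1 + twoPowSeries N (X i : MvPolynomial (Fin k) (ZMod 2)))) := by
  have hle {l : Fin k →₀ ℕ} (hl : l ∈ univ.finsuppAntidiag m) (i : Fin k) : l i < m + 1 :=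
    Nat.lt_succ_of_le <| (mem_finsuppAntidiag.mp hl).1 ▸ single_le_sum (by simp) (mem_univ i)
  rw [coeff_prod_one_add_twoPowSeries, G]
  simp only [ite_and]
  rw [← sum_filter]
  refine sum_nbij' (fun d => Finsupp.equivFunOnFinite.symm fun i => (d i : ℕ))
    (fun l i => Fin.ofNat (m + 1) (l i)) ?_ ?_ ?_ ?_ ?_
  · intro d hd
    simpa [mem_finsuppAntidiag] using hd
  · intro l hl
    simpa [Nat.mod_eq_of_lt (hle hl _)] using (mem_finsuppAntidiag.mp hl).1
  · intro d _
    funext i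
    simp
  · intro l hl
    ext i
    simp [Nat.mod_eq_of_lt (hle hl i)]
  · intro d _
    have hiff : (∀ i, (d i : ℕ) ≠ 0 → ∃ e, (d i : ℕ) = 2 ^ e) ↔
        ∀ i ∈ univ, (d i : ℕ) = 0 ∨ ∃ e < N, (d i : ℕ) = 2 ^ e := by
      refine forall_congr' fun i => ?_
      rw [or_iff_not_imp_left]
      refine ⟨fun h _ hi => ?_, fun h hi => ?_⟩
      · obtain ⟨e, he⟩ := h hi
        exact ⟨e, (Nat.pow_lt_pow_iff_right one_lt_two).mp (he ▸ (d i).is_le.trans_lt hm), he⟩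
      · obtain ⟨e, -, he⟩ := h (mem_univ i) hi
        exact ⟨e, he⟩
    simp only [Finsupp.coe_equivFunOnFinite_symm, hiff]
    congr 1

theorem aeval_update_add_G {k j : ℕ} (hjk : j < k) {u v : Fin k} (huv : u ≠ v) :
    aeval (Function.update (X : Fin k → MvPolynomial (Fin k) (ZMod 2)) u (X u + X v))
      (G k (2 ^ k - 2 ^ j)) = G k (2 ^ k - 2 ^ j) := by
  have hm : 2 ^ k - 2 ^ j < 2 ^ k := Nat.sub_lt (by positivity) (by positivity)
  have hm0 : 1 ≤ 2 ^ k - 2 ^ j := Nat.sub_pos_of_lt (Nat.pow_lt_pow_right one_lt_two hjk)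
  have hrest : PowerSeries.coeff (2 ^ k - 2 ^ j - 1) (∏ i ∈ (Finset.univ.erase u).erase v,
      (1 + twoPowSeries k (X i : MvPolynomial (Fin k) (ZMod 2)))) = 0 := by
    refine coeff_prod_one_add_twoPowSeries_eq_zero X ?_
    have := Nat.digits_sum_pow_sub_pow_sub_one 2 hjk
    norm_num at this
    rw [Finset.card_erase_of_mem (Finset.mem_erase.mpr ⟨huv.symm, Finset.mem_univ v⟩),
      Finset.card_erase_of_mem (Finset.mem_univ u), Finset.card_univ, Fintype.card_fin]
    omega
  rw [G_eq_coeff_prod hm, ← AlgHom.coe_toRingHom, ← PowerSeries.coeff_map, map_prod]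
  simp only [map_add, map_one, map_twoPowSeries, AlgHom.coe_toRingHom, aeval_X]
  rw [prod_one_add_twoPowSeries_update k (Finset.mem_univ u) (Finset.mem_univ v) huv X, map_add,
    add_eq_left, add_mul, map_add, PowerSeries.monomial_eq_C_mul_X_pow,
    PowerSeries.monomial_eq_C_mul_X_pow, mul_assoc, mul_assoc, PowerSeries.coeff_C_mul,
    PowerSeries.coeff_C_mul, PowerSeries.coeff_X_pow_mul', PowerSeries.coeff_X_pow_mul',
    if_pos hm0, if_neg hm.not_ge, hrest, mul_zero, mul_zero, add_zero]

section LinearSubstitution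

variable {σ R : Type*} [Fintype σ]

noncomputable def linSubst [CommSemiring R] (A : Matrix σ σ R) :
    MvPolynomial σ R →ₐ[R] MvPolynomial σ R :=
  aeval fun i => ∑ j, C (A i j) * X j

theorem linSubst_mul [CommSemiring R] (A B : Matrix σ σ R) :
    linSubst (A * B) = (linSubst B).comp (linSubst A) := by
  refine algHom_ext fun i => ?_
  simp only [linSubst, AlgHom.comp_apply, aeval_X, map_sum, map_mul, aeval_C, algebraMap_eq,
    Matrix.mul_apply, Finset.mul_sum, Finset.sum_mul, mul_assoc]
  exact Finset.sum_comm

variable [DecidableEq σ]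

theorem linSubst_one [CommSemiring R] : linSubst (1 : Matrix σ σ R) = AlgHom.id R _ := by
  refine algHom_ext fun i => ?_
  simp [linSubst, Matrix.one_apply]

theorem linSubst_transvection [CommRing R] (i j : σ) (c : R) :
    linSubst (Matrix.transvection i j c) = aeval (Function.update X i (X i + C c * X j)) := by
  refine algHom_ext fun l => ?_
  simp only [linSubst, aeval_X, Matrix.transvection, Matrix.add_apply, map_add, add_mul,
    Finset.sum_add_distrib, Matrix.one_apply, Matrix.single_apply, Function.update_apply]
  split_ifs with h
  · subst h
    simp [apply_ite C, ite_mul]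
  · simp [Ne.symm h]

end LinearSubstitution

theorem Matrix.diagonal_eq_one_of_isUnit_det_zmod_two {n : Type*} [Fintype n] [DecidableEq n]
    {D : n → ZMod 2} (hD : IsUnit (Matrix.diagonal D).det) : Matrix.diagonal D = 1 := by
  rw [← Matrix.diagonal_one]
  congr 1
  funext i
  rw [Matrix.det_diagonal, isUnit_iff_ne_zero, Finset.prod_ne_zero_iff] at hD
  have hne : ∀ x : ZMod 2, x ≠ 0 → x = 1 := by decide
  exact hne _ (hD i (Finset.mem_univ i))

theorem stmt13 (k j : ℕ) (hk : 1 ≤ k) (hj : j ≤ k - 1)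
    (A : Matrix (Fin k) (Fin k) (ZMod 2)) (hA : IsUnit A.det) :
    aeval (fun i => ∑ j', C (A i j') * X j') (G k (2 ^ k - 2 ^ j)) =
      G k (2 ^ k - 2 ^ j) := by
  have hjk : j < k := by omega
  refine Matrix.diagonal_transvection_induction (fun M => linSubst M (G k _) = G k _) A
    (fun D hD => ?_) (fun ⟨u, v, huv, c⟩ => ?_) (fun M N hM hN => ?_)
  · rw [Matrix.diagonal_eq_one_of_isUnit_det_zmod_two (hD ▸ hA), linSubst_one]
    rfl
  · change linSubst (Matrix.transvection u v c) _ = _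
    obtain rfl | rfl : c = 0 ∨ c = 1 := by revert c; decide
    · rw [Matrix.transvection_zero, linSubst_one]
      rfl
    · rw [linSubst_transvection]
      simpa using aeval_update_add_G hjk huv
  · rw [linSubst_mul, AlgHom.comp_apply, hM, hN]
end

section
/- For every k ≥ 1, N(k,0) = D² in F₂[x_1,…,x_k]; equivalently, the quotient polynomial p_{k,0} = N(k,0)/D equals D itself (so the Dickson invariant c_0 coincides with the product of all nonzero linear forms). -/
open MvPolynomial

theorem stmt14 (k : ℕ) (hk : 1 ≤ k) : N k k 0 = D k ^ 2 := by
  have h1 : N k k 0 = Vdm k (fun i => 2 ^ ((i : ℕ) + 1)) := by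
    unfold N
    congr 1
    funext i
    by_cases h : (i : ℕ) + 1 < k
    · simp [h]
    · have hk' : (i : ℕ) + 1 = k := le_antisymm i.isLt (not_lt.mp h)
      simp [h, hk']
  have h2 : D k ^ 2 = Vdm k (fun i => 2 ^ ((i : ℕ) + 1)) := by
    unfold D Vdm
    rw [← frobenius_def (p := 2)]
    rw [RingHom.map_det]
    refine congrArg Matrix.det (Matrix.ext fun i j => ?_)
    simp only [RingHom.mapMatrix_apply, Matrix.map_apply, Matrix.of_apply, frobenius_def,
      ← pow_mul, pow_succ]
    ring
  rw [h1, h2]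
end

section
/- Let k ≥ 1 and ℓ ≥ k+1. Then N(ℓ,0) = N(ℓ−1,k−1)² in F₂[x_1,…,x_k]. Consequently, if P, Q ∈ F₂[x_1,…,x_k] satisfy D·P = N(ℓ,0) and D·Q = N(ℓ−1,k−1), then P = D·Q² (this is the relation p_{ℓ,0} = c_0·p_{ℓ−1,k−1}², where c_0 = D). -/
open MvPolynomial

/-!
Over `F₂` squaring is a ring endomorphism, so the square of a determinant is the determinant of
the entrywise square; for the matrix `(xᵢ ^ t j)` this doubles every exponent. Doubling the tuple
of `N(ℓ - 1, k - 1)`, namely `2^0, …, 2^(k-2), 2^(ℓ-1)`, gives `2^1, …, 2^(k-1), 2^ℓ`, the tuple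
of `N(ℓ, 0)`. The second claim then follows by cancelling `D`, which is nonzero because its
diagonal monomial `∏ xᵢ ^ 2^(i-1)` occurs only once in the Leibniz expansion.
-/

open Matrix Function

theorem prod_X_pow_eq_monomial_equivFunOnFinite {σ R : Type*} [Fintype σ] [CommSemiring R]
    (f : σ → ℕ) :
    ∏ i, (X i : MvPolynomial σ R) ^ f i = monomial (Finsupp.equivFunOnFinite.symm f) 1 := by
  rw [prod_X_pow]
  congr
  ext i
  exact Finsupp.indicator_of_mem (Finset.mem_univ i) _

theorem coeff_det_of_X_pow {n R : Type*} [Fintype n] [DecidableEq n] [CommRing R]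
    {t : n → ℕ} (ht : Injective t) :
    coeff (Finsupp.equivFunOnFinite.symm t)
      (det (of fun i j => (X i : MvPolynomial n R) ^ t j)) = 1 := by
  rw [det_apply, coeff_sum, Finset.sum_eq_single 1]
  · simp [prod_X_pow_eq_monomial_equivFunOnFinite]
  · intro σ _ hσ
    have hprod : ∏ i, (X (σ i) : MvPolynomial n R) ^ t i = ∏ j, X j ^ t (σ.symm j) := by
      rw [← Equiv.prod_comp σ fun j => (X j : MvPolynomial n R) ^ t (σ.symm j)]
      simp
    simp only [of_apply, hprod, Units.smul_def, coeff_smul,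
      prod_X_pow_eq_monomial_equivFunOnFinite, coeff_monomial]
    rw [if_neg, smul_zero]
    intro h
    refine hσ (Equiv.ext fun j => (ht ?_).symm)
    simpa using congrFun (congrArg Finsupp.equivFunOnFinite h) (σ j)
  · simp

theorem det_of_X_pow_ne_zero {n R : Type*} [Fintype n] [DecidableEq n] [CommRing R]
    [Nontrivial R] {t : n → ℕ} (ht : Injective t) :
    det (of fun i j => (X i : MvPolynomial n R) ^ t j) ≠ 0 := fun h =>
  one_ne_zero (α := R) <| by rw [← coeff_det_of_X_pow ht, h, coeff_zero]

theorem det_pow_expChar {n R : Type*} [Fintype n] [DecidableEq n] [CommRing R] (p : ℕ)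
    [ExpChar R p] (M : Matrix n n R) : M.det ^ p = (M.map (· ^ p)).det :=
  RingHom.map_det (frobenius R p) M

theorem Vdm_sq (k : ℕ) (t : Fin k → ℕ) : Vdm k t ^ 2 = Vdm k (fun j => 2 * t j) := by
  rw [Vdm, Vdm, det_pow_expChar]
  congr
  ext i j
  simp [← pow_mul, mul_comm]

theorem N_succ_zero_eq_sq (k m : ℕ) : N k (m + 1) 0 = N k m (k - 1) ^ 2 := by
  rw [N, N, Vdm_sq]
  congr
  funext i
  split_ifs <;> omega

theorem D_ne_zero (k : ℕ) : D k ≠ 0 :=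
  det_of_X_pow_ne_zero ((Nat.pow_right_injective le_rfl).comp Fin.val_injective)

theorem stmt15_general (k ℓ : ℕ) (hℓ : k + 1 ≤ ℓ) :
    N k ℓ 0 = N k (ℓ - 1) (k - 1) ^ 2 ∧
      ∀ P Q : MvPolynomial (Fin k) (ZMod 2),
        D k * P = N k ℓ 0 → D k * Q = N k (ℓ - 1) (k - 1) → P = D k * Q ^ 2 := by
  obtain ⟨m, rfl⟩ : ∃ m, ℓ = m + 1 := ⟨ℓ - 1, by omega⟩
  rw [Nat.add_sub_cancel]
  have hN := N_succ_zero_eq_sq k m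
  refine ⟨hN, fun P Q hP hQ => mul_left_cancel₀ (D_ne_zero k) ?_⟩
  rw [hP, hN, ← hQ]
  ring

theorem stmt15 (k ℓ : ℕ) (hk : 1 ≤ k) (hℓ : k + 1 ≤ ℓ) :
    N k ℓ 0 = N k (ℓ - 1) (k - 1) ^ 2 ∧
      ∀ P Q : MvPolynomial (Fin k) (ZMod 2),
        D k * P = N k ℓ 0 → D k * Q = N k (ℓ - 1) (k - 1) → P = D k * Q ^ 2 :=
  stmt15_general k ℓ hℓ
end

section
/- Let k ≥ 1 and 0 ≤ j ≤ k−1. Then N(k+1,j)·D² = N(k,j−1)²·D + N(k,j)·N(k,k−1)² in F₂[x_1,…,x_k], where N(k,j−1) is interpreted as 0 when j = 0. (Equivalently, in terms of the quotient polynomials p_{ℓ,j} = N(ℓ,j)/D and Dickson invariants c_j = p_{k,j}: p_{k+1,j} = c_{j−1}² + c_j·c_{k−1}².) -/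
open MvPolynomial

/-! For `j < k`, moving the last column of `N(ℓ, j)` to position `j` shows that, up to a sign
invisible in characteristic 2, `N(ℓ, j)` is the `j`-th Cramer determinant of the Moore matrix
`M = (xᵢ ^ 2 ^ c)` against the column `v_ℓ = (xᵢ ^ 2 ^ ℓ)`. Cramer's rule thus gives
`D • v_k = ∑ₘ N(k, m) • v_m`, and the Frobenius map turns it into
`D² • v_{k+1} = ∑ₘ N(k, m)² • v_{m+1}`. Taking the `j`-th Cramer determinant of both sides,
each `v_{m+1}` with `m + 1 < k` is a column of `M` and contributes `D` if `m + 1 = j` and `0`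
otherwise, while `v_k` contributes `N(k, j)`. -/

open Matrix

lemma det_submatrix_perm_of_charTwo {n R : Type*} [DecidableEq n] [Fintype n] [CommRing R]
    [CharP R 2] (M : Matrix n n R) (σ : Equiv.Perm n) : (M.submatrix id σ).det = M.det := by
  rw [det_permute']
  rcases Int.units_eq_one_or (Equiv.Perm.sign σ) with h | h <;> simp [h, CharTwo.neg_eq]

noncomputable def mooreMatrix (k : ℕ) : Matrix (Fin k) (Fin k) (MvPolynomial (Fin k) (ZMod 2)) :=
  of fun i c => X i ^ 2 ^ (c : ℕ)

lemma det_mooreMatrix (k : ℕ) : (mooreMatrix k).det = D k := rfl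

lemma N_eq_cramer {k j : ℕ} (ℓ : ℕ) (hj : j < k) :
    N k ℓ j = cramer (mooreMatrix k) (fun i => X i ^ 2 ^ ℓ) ⟨j, hj⟩ := by
  cases k with
  | zero => omega
  | succ k =>
    rw [cramer_apply,
      ← det_submatrix_perm_of_charTwo _ (Fin.cycleIcc ⟨j, hj⟩ (Fin.last k)), N, Vdm]
    congr 1
    refine Matrix.ext fun r c => ?_
    simp only [submatrix_apply, updateCol_apply, mooreMatrix, of_apply, id]
    have hc := c.isLt
    rcases lt_or_ge (c : ℕ) j with hcj | hjc
    · rw [Fin.cycleIcc_of_lt (Fin.mk_lt_mk.mpr hcj)]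
      simp [Fin.ext_iff, hcj.ne, hcj, show (c : ℕ) + 1 < k + 1 by omega]
    · rcases eq_or_ne c (Fin.last k) with rfl | hcl
      · rw [Fin.cycleIcc_of_last (Fin.mk_le_mk.mpr (by simpa using hjc))]
        simp
      · have hlt : (c : ℕ) < k := Fin.val_lt_last hcl
        rw [Fin.cycleIcc_of_ge_of_lt (Fin.mk_le_mk.mpr hjc) (Fin.lt_last_iff_ne_last.mpr hcl)]
        simp [Fin.ext_iff, Fin.val_add_one_of_lt (Fin.lt_last_iff_ne_last.mpr hcl), hlt,
          hjc.not_gt, show (c : ℕ) + 1 ≠ j by omega]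

lemma N_of_lt {k ℓ j : ℕ} (hℓ : ℓ < k) (hj : j < k) : N k ℓ j = if ℓ = j then D k else 0 := by
  have hcol : cramer (mooreMatrix k) (fun i => X i ^ 2 ^ ℓ) = Pi.single ⟨ℓ, hℓ⟩ (D k) := by
    have h := cramer_transpose_row_self (mooreMatrix k)ᵀ ⟨ℓ, hℓ⟩
    rwa [transpose_transpose, det_transpose, det_mooreMatrix] at h
  rw [N_eq_cramer ℓ hj, hcol, Pi.single_apply]
  simp [eq_comm]

lemma D_mul_X_pow_eq_sum (k : ℕ) (i : Fin k) :
    D k * X i ^ 2 ^ k = ∑ m : Fin k, N k k m * X i ^ 2 ^ (m : ℕ) := by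
  have h := congrFun (mulVec_cramer (mooreMatrix k) fun i => X i ^ 2 ^ k) i
  simp only [mulVec, dotProduct, Pi.smul_apply, smul_eq_mul] at h
  rw [← det_mooreMatrix, ← h]
  refine Finset.sum_congr rfl fun m _ => ?_
  rw [N_eq_cramer k m.isLt, mul_comm]
  rfl

lemma D_sq_mul_X_pow_eq_sum (k : ℕ) (i : Fin k) :
    D k ^ 2 * X i ^ 2 ^ (k + 1) = ∑ m : Fin k, N k k m ^ 2 * X i ^ 2 ^ ((m : ℕ) + 1) := by
  have h := congrArg (· ^ 2) (D_mul_X_pow_eq_sum k i)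
  simpa only [sum_pow_char, mul_pow, ← pow_mul, ← pow_succ] using h

lemma mul_N_eq_sum_of_mul_X_pow_eq_sum {k ℓ j : ℕ} (hj : j < k) {ι : Type*} (s : Finset ι)
    (a : MvPolynomial (Fin k) (ZMod 2)) (b : ι → MvPolynomial (Fin k) (ZMod 2)) (e : ι → ℕ)
    (h : ∀ i, a * X i ^ 2 ^ ℓ = ∑ m ∈ s, b m * X i ^ 2 ^ e m) :
    a * N k ℓ j = ∑ m ∈ s, b m * N k (e m) j := by
  have hcol : a • (fun i => X i ^ 2 ^ ℓ) = ∑ m ∈ s, b m • fun i : Fin k => X i ^ 2 ^ e m := by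
    ext1 i
    simpa using h i
  simp only [N_eq_cramer _ hj]
  rw [← smul_eq_mul, ← Pi.smul_apply, ← map_smul, hcol, map_sum, Finset.sum_apply]
  simp only [map_smul, Pi.smul_apply, smul_eq_mul]

theorem stmt16 (k j : ℕ) (hk : 1 ≤ k) (hj : j ≤ k - 1) :
    N k (k + 1) j * D k ^ 2 =
      (if 1 ≤ j then N k k (j - 1) ^ 2 * D k else 0) +
        N k k j * N k k (k - 1) ^ 2 := by
  obtain ⟨k, rfl⟩ : ∃ k', k = k' + 1 := ⟨k - 1, by omega⟩
  have hjk : j < k + 1 := by omega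
  have hcolumn (m : Fin k) : N (k + 1) (m + 1) j = if (m : ℕ) + 1 = j then D (k + 1) else 0 :=
    N_of_lt (by omega) hjk
  rw [mul_comm, mul_N_eq_sum_of_mul_X_pow_eq_sum hjk _ _ _ _ (D_sq_mul_X_pow_eq_sum (k + 1)),
    Fin.sum_univ_castSucc]
  simp only [Fin.val_castSucc, hcolumn, Fin.val_last, Nat.add_sub_cancel, mul_comm (N _ _ j)]
  congr 1
  rcases j with _ | j
  · simp
  · rw [Fin.sum_univ_eq_sum_range
      fun m => N (k + 1) (k + 1) m ^ 2 * if m + 1 = j + 1 then D (k + 1) else 0]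
    simp [show j < k by omega]
end
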